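/- arXiv:1709.01227 — 9 statements merged into one kernel-verified Lean document; each statement's English description precedes it below -/
import Mathlib

section
/- Let G be a finite connected simple graph with boundary B ⊆ V, |B| = m ≥ 2, with B an independent set. Let Ĝ be the graph obtained from G by adding an edge between every pair of distinct boundary nodes. Then the chromatic polynomial of Ĝ satisfies χ_Ĝ(t) = t(t−1)(t−2)⋯(t−m+1) · P(t), where P is the precoloring polynomial of (G,B), i.e., for every integer ℓ ≥ m and every bijection c : B → {1,…,m}, P(ℓ) equals the number of proper ℓ-colorings of G extending c. -/
open Polynomial

-- fiber cardinality independence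
lemma fiber_card_eq {V : Type*} [Fintype V] (G : SimpleGraph V) (B : Set V) (ℓ : ℕ)
    (φ₀ φ : B → Fin ℓ) (h₀ : Function.Injective φ₀) (h₁ : Function.Injective φ) :
    Nat.card {f : V → Fin ℓ // (∀ i j : V, G.Adj i j → f i ≠ f j) ∧ ∀ b : B, f b = φ₀ b}
      = Nat.card {f : V → Fin ℓ // (∀ i j : V, G.Adj i j → f i ≠ f j) ∧ ∀ b : B, f b = φ b} := by
  classical
  let e : Set.range φ₀ ≃ Set.range φ :=
    (Equiv.ofInjective φ₀ h₀).symm.trans (Equiv.ofInjective φ h₁)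
  let σ : Equiv.Perm (Fin ℓ) := Equiv.extendSubtype e
  have hσ : ∀ b : B, σ (φ₀ b) = φ b := by
    intro b
    haveI : Nonempty B := ⟨b⟩
    have hmem : φ₀ b ∈ Set.range φ₀ := ⟨b, rfl⟩
    rw [Equiv.extendSubtype_apply_of_mem _ _ hmem]
    have h2 : (⟨φ₀ b, hmem⟩ : Set.range φ₀) = Equiv.ofInjective φ₀ h₀ b := rfl
    show ((e ⟨φ₀ b, hmem⟩ : Set.range φ) : Fin ℓ) = φ b
    rw [show e ⟨φ₀ b, hmem⟩ = Equiv.ofInjective φ h₁ b by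
      simp only [e, Equiv.trans_apply, h2, Equiv.symm_apply_apply]]
    rfl
  refine Nat.card_congr ?_
  refine ⟨fun f => ⟨σ ∘ f.1, ?_, ?_⟩, fun f => ⟨σ.symm ∘ f.1, ?_, ?_⟩, ?_, ?_⟩
  · intro i j hij hne
    exact f.2.1 i j hij (σ.injective hne)
  · intro b; simp only [Function.comp_apply, f.2.2 b]; exact hσ b
  · intro i j hij hne
    exact f.2.1 i j hij (σ.symm.injective hne)
  · intro b
    have := f.2.2 b
    simp only [Function.comp_apply, this, ← hσ b, Equiv.symm_apply_apply]
  · intro f; ext x; simp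
  · intro f; ext x; simp

/-- `χ_Ĝ(t) = t(t-1)⋯(t-m+1) · P(t)` where `P` is the precoloring
polynomial of `(G,B)` and `Ĝ` is obtained from `G` by joining all pairs of boundary
nodes. The chromatic polynomial `χ` and the precoloring polynomial `P` are
characterized by their values at integers. -/
theorem chromatic_eq_fallingFactorial_mul_precoloring
    (V : Type*) [Fintype V] (G : SimpleGraph V) (hconn : G.Connected)
    (B : Set V) (m : ℕ) (hm : Nat.card B = m) (hm2 : 2 ≤ m)
    (hBindep : ∀ i ∈ B, ∀ j ∈ B, ¬ G.Adj i j)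
    (Ghat : SimpleGraph V)
    (hGhat : ∀ i j : V, Ghat.Adj i j ↔ (G.Adj i j ∨ (i ∈ B ∧ j ∈ B ∧ i ≠ j)))
    (χ P : Polynomial ℚ)
    (hχ : ∀ ℓ : ℕ, χ.eval (ℓ : ℚ) =
      Nat.card {f : V → Fin ℓ // ∀ i j : V, Ghat.Adj i j → f i ≠ f j})
    (hP : ∀ ℓ : ℕ, ∀ (c : B ≃ Fin m), ∀ h : m ≤ ℓ,
      P.eval (ℓ : ℚ) =
      Nat.card {f : V → Fin ℓ //
        (∀ i j : V, G.Adj i j → f i ≠ f j) ∧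
        ∀ j : V, ∀ hj : j ∈ B, f j = Fin.castLE h (c ⟨j, hj⟩)}) :
    χ = (∏ i ∈ Finset.range m, (X - C (i : ℚ))) * P := by
  classical
  haveI : Fintype B := Fintype.ofFinite B
  have hcardB : Fintype.card B = m := by rwa [← Nat.card_eq_fintype_card]
  obtain ⟨c⟩ : Nonempty (B ≃ Fin m) := ⟨Fintype.equivFinOfCardEq hcardB⟩
  -- agreement at each ℓ ≥ m
  have key : ∀ ℓ : ℕ, m ≤ ℓ →
      χ.eval (ℓ : ℚ) = (∏ i ∈ Finset.range m, ((ℓ : ℚ) - i)) * P.eval (ℓ : ℚ) := by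
    intro ℓ hℓ
    set φ₀ : B → Fin ℓ := fun b => Fin.castLE hℓ (c b) with hφ₀def
    have hφ₀inj : Function.Injective φ₀ := by
      intro a b hab
      exact c.injective (Fin.castLE_injective hℓ hab)
    set K := Nat.card {f : V → Fin ℓ //
        (∀ i j : V, G.Adj i j → f i ≠ f j) ∧ ∀ b : B, f b = φ₀ b} with hK
    have hPK : P.eval (ℓ : ℚ) = K := by
      rw [hP ℓ c hℓ]
      congr 1
      apply Nat.card_congr
      apply Equiv.subtypeEquivRight
      intro f
      constructor
      · rintro ⟨h1, h2⟩; exact ⟨h1, fun b => h2 b b.2⟩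
      · rintro ⟨h1, h2⟩; exact ⟨h1, fun j hj => h2 ⟨j, hj⟩⟩
    -- the sigma decomposition
    have hcount : Nat.card {f : V → Fin ℓ // ∀ i j : V, Ghat.Adj i j → f i ≠ f j}
        = ℓ.descFactorial m * K := by
      have hfwd : ∀ f : {f : V → Fin ℓ // ∀ i j : V, Ghat.Adj i j → f i ≠ f j},
          Function.Injective (fun b : B => f.1 b) := by
        intro f a b hab
        by_contra hne
        have hne' : (a : V) ≠ (b : V) := fun h => hne (Subtype.ext h)
        exact f.2 a b ((hGhat a b).2 (Or.inr ⟨a.2, b.2, hne'⟩)) hab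
      have hbwd : ∀ x : (Σ φ : B ↪ Fin ℓ, {f : V → Fin ℓ //
              (∀ i j : V, G.Adj i j → f i ≠ f j) ∧ ∀ b : B, f b = φ b}),
          ∀ i j : V, Ghat.Adj i j → x.2.1 i ≠ x.2.1 j := by
        intro x i j hij
        rcases (hGhat i j).1 hij with h | ⟨hi, hj, hne⟩
        · exact x.2.2.1 i j h
        · have h1 : x.2.1 i = x.1 ⟨i, hi⟩ := x.2.2.2 ⟨i, hi⟩
          have h2 : x.2.1 j = x.1 ⟨j, hj⟩ := x.2.2.2 ⟨j, hj⟩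
          rw [h1, h2]
          intro heq
          exact hne (congrArg Subtype.val (x.1.injective heq))
      have E : {f : V → Fin ℓ // ∀ i j : V, Ghat.Adj i j → f i ≠ f j}
          ≃ Σ φ : B ↪ Fin ℓ, {f : V → Fin ℓ //
              (∀ i j : V, G.Adj i j → f i ≠ f j) ∧ ∀ b : B, f b = φ b} := by
        refine ⟨fun f => ⟨⟨fun b => f.1 b, hfwd f⟩, f.1,
            fun i j h => f.2 i j ((hGhat i j).2 (Or.inl h)), fun b => rfl⟩,
          fun x => ⟨x.2.1, hbwd x⟩, fun f => rfl, ?_⟩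
        have hinjSig : ∀ x y : (Σ φ : B ↪ Fin ℓ, {f : V → Fin ℓ //
            (∀ i j : V, G.Adj i j → f i ≠ f j) ∧ ∀ b : B, f b = φ b}),
            x.2.1 = y.2.1 → x = y := by
          rintro ⟨φ, f, hf, hext⟩ ⟨φ', f', hf', hext'⟩ h
          dsimp only at h
          subst h
          have hφ : φ = φ' := Function.Embedding.ext fun b => by
            rw [← hext b, ← hext' b]
          subst hφ
          rfl
        intro x
        exact hinjSig _ _ rfl
      rw [Nat.card_congr E]
      haveI : ∀ φ : B ↪ Fin ℓ, Fintype {f : V → Fin ℓ //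
          (∀ i j : V, G.Adj i j → f i ≠ f j) ∧ ∀ b : B, f b = φ b} :=
        fun φ => Fintype.ofFinite _
      rw [Nat.card_eq_fintype_card, Fintype.card_sigma]
      have hfib : ∀ φ : B ↪ Fin ℓ, Fintype.card {f : V → Fin ℓ //
          (∀ i j : V, G.Adj i j → f i ≠ f j) ∧ ∀ b : B, f b = φ b} = K := by
        intro φ
        rw [← Nat.card_eq_fintype_card, hK]
        exact (fiber_card_eq G B ℓ φ₀ φ hφ₀inj φ.injective).symm
      simp only [hfib, Finset.sum_const, Finset.card_univ, smul_eq_mul]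
      congr 1
      rw [Fintype.card_embedding_eq, Fintype.card_fin, hcardB]
    have hprod : (∏ i ∈ Finset.range m, ((ℓ : ℚ) - i)) = (ℓ.descFactorial m : ℚ) := by
      rw [Nat.descFactorial_eq_prod_range, Nat.cast_prod]
      apply Finset.prod_congr rfl
      intro i hi
      rw [Nat.cast_sub (le_trans (Finset.mem_range.1 hi).le hℓ)]
    rw [hχ ℓ, hcount, hprod, hPK, Nat.cast_mul]
  -- conclude polynomial identity
  apply Polynomial.eq_of_infinite_eval_eq
  apply Set.Infinite.mono (s := (fun n : ℕ => (n : ℚ)) '' Set.Ici m)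
  · rintro x ⟨ℓ, hℓ, rfl⟩
    have := key ℓ hℓ
    simp only [Set.mem_setOf_eq, this, eval_mul, eval_prod, eval_sub, eval_X, eval_C]
  · exact (Set.Ici_infinite m).image (fun a _ b _ h => Nat.cast_injective h)
end

section
/- Let G be a finite connected simple graph with independent boundary B, |B| ≥ 2, and injective boundary data u : B → ℝ. An acyclic orientation σ of G respects u if for every directed path in σ from a boundary node i to a boundary node j one has u(i) > u(j). Then the map sending a chamber C of the Dirichlet arrangement A(G,u) to the orientation σ(C), which orients each edge ij from i to j whenever x_i > x_j for some (equivalently any) point x in C, is a bijection from the set of chambers of A(G,u) to the set of acyclic orientations of G respecting u. -/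
/-!
Along an edge `ij` the sign of `x i - x j` cannot change inside a connected component of the
complement (intermediate value theorem), while the points with a prescribed orientation form a
convex set; hence the chambers are exactly the fibres of `x ↦ σ(x)`. An acyclic orientation
respecting `u` is realised by `x = h + ε g`, where `h v` is the largest boundary value reachable
from `v` (or a floor below all of `u`) and `g v` counts the descendants of `v` at the same height:
`h` is weakly decreasing along arcs, `g` breaks the ties, and both leave the boundary untouched.
-/

open Relation Finset Filter Topology

lemma exists_pos_forall_lt_add_mul {ι : Type*} [Finite ι] (f g : ι → ℝ) :
    ∃ ε > 0, ∀ i j, f i < f j → f i + ε * g i < f j + ε * g j := by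
  have h : ∀ᶠ ε in 𝓝 (0 : ℝ), ∀ i j, f i < f j → f i + ε * g i < f j + ε * g j := by
    refine eventually_all.2 fun i => eventually_all.2 fun j => ?_
    by_cases hij : f i < f j
    · have hcont : Continuous fun ε : ℝ => f i + ε * g i := by fun_prop
      have hcont' : Continuous fun ε : ℝ => f j + ε * g j := by fun_prop
      filter_upwards [hcont.continuousAt.eventually_lt hcont'.continuousAt (by simpa using hij)]
        with ε hε using fun _ => hε
    · exact Eventually.of_forall fun _ h => absurd h hij
  exact h.exists_gt

section BoundaryHeight

variable {V : Type*} [Fintype V] (B : Set V) (u : V → ℝ) (r : V → V → Prop) (m : ℝ)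

open Classical in
noncomputable def boundaryHeight (v : V) : ℝ :=
  (insert m ((univ.filter fun b => b ∈ B ∧ ReflTransGen r v b).image u)).max'
    (insert_nonempty _ _)

variable {B u r m}

lemma le_boundaryHeight_of_reflTransGen {v b : V} (hb : b ∈ B) (hvb : ReflTransGen r v b) :
    u b ≤ boundaryHeight B u r m v := by
  classical
  exact le_max' _ _ (mem_insert_of_mem (mem_image_of_mem u (by simp [hb, hvb])))

lemma le_boundaryHeight (v : V) : m ≤ boundaryHeight B u r m v := by
  classical
  exact le_max' _ _ (mem_insert_self _ _)

lemma boundaryHeight_eq_or_exists (v : V) :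
    boundaryHeight B u r m v = m ∨
      ∃ b ∈ B, ReflTransGen r v b ∧ boundaryHeight B u r m v = u b := by
  classical
  rcases mem_insert.1 (max'_mem _ (insert_nonempty m _)) with h | h
  · exact Or.inl h
  · obtain ⟨b, hb, hbv⟩ := mem_image.1 h
    simp only [mem_filter, mem_univ, true_and] at hb
    exact Or.inr ⟨b, hb.1, hb.2, hbv.symm⟩

lemma boundaryHeight_le_of_reflTransGen {v w : V} (hvw : ReflTransGen r v w) :
    boundaryHeight B u r m w ≤ boundaryHeight B u r m v := by
  rcases boundaryHeight_eq_or_exists (m := m) w with h | ⟨b, hb, hwb, h⟩ <;> rw [h]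
  · exact le_boundaryHeight v
  · exact le_boundaryHeight_of_reflTransGen hb (hvw.trans hwb)

lemma boundaryHeight_lt_of_transGen (hm : ∀ b ∈ B, m < u b)
    (hresp : ∀ i ∈ B, ∀ j ∈ B, TransGen r i j → u j < u i) {b w : V} (hb : b ∈ B)
    (hbw : TransGen r b w) :
    boundaryHeight B u r m w < u b := by
  rcases boundaryHeight_eq_or_exists (m := m) w with h | ⟨c, hc, hwc, h⟩ <;> rw [h]
  · exact hm b hb
  · exact hresp b hb c hc (hbw.trans_left hwc)

lemma boundaryHeight_of_mem (hm : ∀ b ∈ B, m < u b)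
    (hresp : ∀ i ∈ B, ∀ j ∈ B, TransGen r i j → u j < u i) {b : V} (hb : b ∈ B) :
    boundaryHeight B u r m b = u b := by
  refine le_antisymm ?_ (le_boundaryHeight_of_reflTransGen hb ReflTransGen.refl)
  rcases boundaryHeight_eq_or_exists (m := m) b with h | ⟨c, hc, hbc, h⟩ <;> rw [h]
  · exact (hm b hb).le
  · rcases reflTransGen_iff_eq_or_transGen.1 hbc with rfl | hbc
    · exact le_rfl
    · exact (hresp b hb c hc hbc).le

end BoundaryHeight

lemma exists_extension_lt_of_acyclic {V : Type*} [Fintype V] {B : Set V} {u : V → ℝ}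
    {r : V → V → Prop} (hacyc : ∀ v, ¬ TransGen r v v)
    (hresp : ∀ i ∈ B, ∀ j ∈ B, TransGen r i j → u j < u i) :
    ∃ x : V → ℝ, (∀ b ∈ B, x b = u b) ∧ ∀ i j, r i j → x j < x i := by
  classical
  obtain ⟨m, hm⟩ : ∃ m, ∀ b ∈ B, m < u b := by
    obtain ⟨m, hm⟩ := (B.toFinite.image u).bddBelow
    exact ⟨m - 1, fun b hb => by linarith [hm (Set.mem_image_of_mem u hb)]⟩
  set h := boundaryHeight B u r m
  let level (v : V) : Finset V := univ.filter fun w => TransGen r v w ∧ h w = h v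
  obtain ⟨ε, hε, hεlt⟩ :=
    exists_pos_forall_lt_add_mul (fun v => h v) fun v => ((level v).card : ℝ)
  refine ⟨fun v => h v + ε * (level v).card, fun b hb => ?_, fun i j hij => ?_⟩
  · have hempty : level b = ∅ := filter_eq_empty_iff.2 fun w _ ⟨hbw, hw⟩ =>
      (boundaryHeight_lt_of_transGen hm hresp hb hbw).ne
        (hw.trans (boundaryHeight_of_mem hm hresp hb))
    simp [hempty, h, boundaryHeight_of_mem hm hresp hb]
  obtain hlt | heq : h j < h i ∨ h j = h i :=
    (boundaryHeight_le_of_reflTransGen (ReflTransGen.single hij)).lt_or_eq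
  · exact hεlt j i hlt
  · have hsub : level j ⊂ level i := by
      refine ssubset_iff_of_subset (fun w hw => ?_) |>.2 ⟨j, ?_, fun hj => ?_⟩
      · simp only [level, mem_filter, mem_univ, true_and] at hw ⊢
        exact ⟨TransGen.head hij hw.1, hw.2.trans heq⟩
      · simp [level, TransGen.single hij, heq]
      · simp only [level, mem_filter, mem_univ, true_and] at hj
        exact hacyc j hj.1
    have hcard : ((level j).card : ℝ) < (level i).card := by exact_mod_cast card_lt_card hsub
    simp only [heq]
    gcongr

lemma pos_iff_pos_of_mem_connectedComponentIn {X : Type*} [TopologicalSpace X] {S : Set X}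
    {f : X → ℝ} (hf : ContinuousOn f S) (hS : ∀ z ∈ S, f z ≠ 0) {x y : X}
    (hy : y ∈ connectedComponentIn S x) : 0 < f x ↔ 0 < f y := by
  have hK := isPreconnected_connectedComponentIn (F := S) (x := x)
  have hfK := hf.mono (connectedComponentIn_subset S x)
  have hx : x ∈ connectedComponentIn S x :=
    mem_connectedComponentIn (connectedComponentIn_nonempty_iff.1 ⟨y, hy⟩)
  have key : ∀ a ∈ connectedComponentIn S x, ∀ b ∈ connectedComponentIn S x,
      0 < f a → 0 < f b := by
    intro a ha b hb hfa
    by_contra! hfb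
    obtain ⟨z, hz, hz0⟩ := hK.intermediate_value hb ha hfK ⟨hfb, hfa.le⟩
    exact hS z (connectedComponentIn_subset S x hz) hz0
  exact ⟨key x hx y hy, key y hy x hx⟩

namespace SimpleGraph

variable {V : Type*}

def orientationOf (G : SimpleGraph V) (x : V → ℝ) (i j : V) : Prop :=
  G.Adj i j ∧ x j < x i

def dirichletComplement (G : SimpleGraph V) (B : Set V) (u : V → ℝ) : Set (V → ℝ) :=
  {x | (∀ j ∈ B, x j = u j) ∧ ∀ i j : V, G.Adj i j → x i ≠ x j}

variable {G : SimpleGraph V} {B : Set V} {u x y : V → ℝ}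

lemma lt_of_transGen_orientationOf {i j : V} (h : TransGen (G.orientationOf x) i j) :
    x j < x i := by
  induction h with
  | single h => exact h.2
  | tail _ h ih => exact h.2.trans ih

lemma orientationOf_iff_not_swap (hx : x ∈ G.dirichletComplement B u) {i j : V}
    (hij : G.Adj i j) : G.orientationOf x i j ↔ ¬ G.orientationOf x j i := by
  refine ⟨fun h h' => h.2.asymm h'.2, fun h => ⟨hij, ?_⟩⟩
  exact (hx.2 i j hij).lt_or_gt.resolve_left fun hlt => h ⟨hij.symm, hlt⟩

lemma segment_subset_dirichletComplement (hx : x ∈ G.dirichletComplement B u)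
    (hy : y ∈ G.dirichletComplement B u) (h : G.orientationOf x = G.orientationOf y) :
    segment ℝ x y ⊆ G.dirichletComplement B u := by
  rintro _ ⟨a, b, ha, hb, hab, rfl⟩
  have hlt : ∀ i j, G.Adj i j → x j < x i → (a • x + b • y) j < (a • x + b • y) i := by
    intro i j hij hxij
    have hyij : y j < y i := ((iff_of_eq (congrFun₂ h i j)).1 ⟨hij, hxij⟩).2
    have := convex_Ioi (0 : ℝ) (sub_pos.2 hxij) (sub_pos.2 hyij) ha hb hab
    simp only [Set.mem_Ioi, smul_eq_mul] at this
    simp only [Pi.add_apply, Pi.smul_apply, smul_eq_mul]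
    linarith
  refine ⟨fun j hj => ?_, fun i j hij => ?_⟩
  · simp only [Pi.add_apply, Pi.smul_apply, smul_eq_mul, hx.1 j hj, hy.1 j hj]
    rw [← add_mul, hab, one_mul]
  · rcases (hx.2 i j hij).lt_or_gt with hxij | hxij
    · exact (hlt j i hij.symm hxij).ne
    · exact (hlt i j hij hxij).ne'

lemma orientationOf_eq_iff_mem_connectedComponentIn (hx : x ∈ G.dirichletComplement B u)
    (hy : y ∈ G.dirichletComplement B u) :
    G.orientationOf x = G.orientationOf y ↔
      y ∈ connectedComponentIn (G.dirichletComplement B u) x := by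
  refine ⟨fun h => ?_, fun h => ?_⟩
  · exact (convex_segment x y).isPreconnected.subset_connectedComponentIn
      (left_mem_segment ℝ x y) (segment_subset_dirichletComplement hx hy h)
      (right_mem_segment ℝ x y)
  · funext i j
    refine propext (and_congr_right fun hij => ?_)
    have := pos_iff_pos_of_mem_connectedComponentIn (f := fun z : V → ℝ => z i - z j)
      (by fun_prop) (fun z hz => sub_ne_zero.2 (hz.2 i j hij)) h
    simpa only [sub_pos] using this

lemma exists_mem_dirichletComplement_orientationOf_eq [Fintype V] {o : V → V → Prop}
    (ho_adj : ∀ i j, o i j → G.Adj i j) (ho_tot : ∀ i j, G.Adj i j → (o i j ↔ ¬ o j i))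
    (ho_acyc : ∀ v, ¬ TransGen o v v)
    (ho_resp : ∀ i ∈ B, ∀ j ∈ B, TransGen o i j → u j < u i) :
    ∃ x ∈ G.dirichletComplement B u, G.orientationOf x = o := by
  obtain ⟨x, hxB, hxo⟩ := exists_extension_lt_of_acyclic ho_acyc ho_resp
  have hxo' : ∀ i j, G.Adj i j → ¬ o i j → x i < x j := fun i j hij hn =>
    hxo j i (not_not.1 (mt (ho_tot i j hij).2 hn))
  refine ⟨x, ⟨hxB, fun i j hij => ?_⟩, ?_⟩
  · by_cases h : o i j
    · exact (hxo i j h).ne'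
    · exact (hxo' i j hij h).ne
  · funext i j
    refine propext ⟨fun ⟨hij, hlt⟩ => ?_, fun h => ⟨ho_adj i j h, hxo i j h⟩⟩
    by_contra hn
    exact hlt.not_gt (hxo' i j hij hn)

end SimpleGraph

open SimpleGraph in
theorem dirichlet_chambers_biject_semicompatible_orientations_general
    (V : Type*) [Fintype V] (G : SimpleGraph V)
    (B : Set V)
    (u : V → ℝ)
    (M : Set (V → ℝ))
    (hM : M = {x | (∀ j ∈ B, x j = u j) ∧ ∀ i j : V, G.Adj i j → x i ≠ x j})
    (ori : (V → ℝ) → V → V → Prop)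
    (hori : ∀ x i j, ori x i j ↔ (G.Adj i j ∧ x j < x i)) :
    (∀ x ∈ M,
      (∀ i j : V, G.Adj i j → (ori x i j ↔ ¬ ori x j i)) ∧
      (∀ v : V, ¬ Relation.TransGen (ori x) v v) ∧
      (∀ i ∈ B, ∀ j ∈ B, Relation.TransGen (ori x) i j → u j < u i)) ∧
    (∀ x ∈ M, ∀ y ∈ M, (ori x = ori y ↔ y ∈ connectedComponentIn M x)) ∧
    (∀ o : V → V → Prop,
      (∀ i j : V, o i j → G.Adj i j) →
      (∀ i j : V, G.Adj i j → (o i j ↔ ¬ o j i)) →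
      (∀ v : V, ¬ Relation.TransGen o v v) →
      (∀ i ∈ B, ∀ j ∈ B, Relation.TransGen o i j → u j < u i) →
      ∃ x ∈ M, ori x = o) := by
  obtain rfl : ori = G.orientationOf := funext fun x => funext fun i => funext fun j =>
    propext (hori x i j)
  obtain rfl : M = G.dirichletComplement B u := hM
  refine ⟨fun x hx => ⟨fun i j => orientationOf_iff_not_swap hx,
      fun v hv => (lt_of_transGen_orientationOf hv).false, fun i hi j hj hij => ?_⟩,
    fun x hx y hy => orientationOf_eq_iff_mem_connectedComponentIn hx hy,
    fun o => exists_mem_dirichletComplement_orientationOf_eq⟩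
  simpa only [hx.1 i hi, hx.1 j hj] using lt_of_transGen_orientationOf hij

/-- The map sending a chamber `C` of the Dirichlet arrangement to the
orientation `σ(C)` (orienting `ij` from `i` to `j` iff `x_i > x_j` on `C`) is a
bijection onto the set of acyclic orientations of `G` respecting `u`.  This is
expressed by: (a) the orientation of any point of the complement `M` is an acyclic
orientation respecting `u`; (b) two points of `M` have the same orientation iff they
lie in the same chamber (connected component of `M`); (c) every acyclic orientation
respecting `u` arises from some point of `M`. -/
theorem dirichlet_chambers_biject_semicompatible_orientations
    (V : Type*) [Fintype V] (G : SimpleGraph V) (hconn : G.Connected)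
    (B : Set V) (hB2 : 2 ≤ Nat.card B)
    (hBindep : ∀ i ∈ B, ∀ j ∈ B, ¬ G.Adj i j)
    (u : V → ℝ) (hu : Set.InjOn u B)
    (M : Set (V → ℝ))
    (hM : M = {x | (∀ j ∈ B, x j = u j) ∧ ∀ i j : V, G.Adj i j → x i ≠ x j})
    (ori : (V → ℝ) → V → V → Prop)
    (hori : ∀ x i j, ori x i j ↔ (G.Adj i j ∧ x j < x i)) :
    (∀ x ∈ M,
      (∀ i j : V, G.Adj i j → (ori x i j ↔ ¬ ori x j i)) ∧
      (∀ v : V, ¬ Relation.TransGen (ori x) v v) ∧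
      (∀ i ∈ B, ∀ j ∈ B, Relation.TransGen (ori x) i j → u j < u i)) ∧
    (∀ x ∈ M, ∀ y ∈ M, (ori x = ori y ↔ y ∈ connectedComponentIn M x)) ∧
    (∀ o : V → V → Prop,
      (∀ i j : V, o i j → G.Adj i j) →
      (∀ i j : V, G.Adj i j → (o i j ↔ ¬ o j i)) →
      (∀ v : V, ¬ Relation.TransGen o v v) →
      (∀ i ∈ B, ∀ j ∈ B, Relation.TransGen o i j → u j < u i) →
      ∃ x ∈ M, ori x = o) :=
  dirichlet_chambers_biject_semicompatible_orientations_general V G B u M hM ori hori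
end

section
/- With notation as before (G connected, B independent with |B| ≥ 2, u : B → ℝ injective), a chamber C of the Dirichlet arrangement A(G,u) is bounded if and only if the corresponding acyclic orientation σ(C) has no sources and no sinks among the interior vertices I = V \ B. -/
/-!
On a chamber `C ∋ x` no coordinate difference `y_i - y_j` over an edge can vanish, so by
connectedness its sign is that of `x_i - x_j`: every point of `C` induces the orientation `σ(C)`.
If an interior vertex `i` has no larger neighbour, moving `x_i` up to `+∞` never meets a
hyperplane, so `C` is unbounded (symmetrically for no smaller neighbour). Conversely, if no
interior vertex is a source or sink, a maximal (minimal) coordinate of any `y ∈ C` sits at a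
boundary vertex, so all coordinates of `y` lie between the extreme values of `u`.
-/

open Function Set Bornology

theorem lt_of_mem_connectedComponentIn {X α : Type*} [TopologicalSpace X] [LinearOrder α]
    [TopologicalSpace α] [OrderClosedTopology α] {S : Set X} {f g : X → α}
    (hf : Continuous f) (hg : Continuous g) (hS : ∀ z ∈ S, f z ≠ g z) {x y : X}
    (hy : y ∈ connectedComponentIn S x) (hxy : f x < g x) : f y < g y := by
  have hx : x ∈ connectedComponentIn S x :=
    mem_connectedComponentIn (connectedComponentIn_nonempty_iff.1 ⟨y, hy⟩)
  by_contra! hyx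
  obtain ⟨z, hz, hfg⟩ := isPreconnected_connectedComponentIn.intermediate_value₂ hx hy
    hf.continuousOn hg.continuousOn hxy.le hyx
  exact hS z (connectedComponentIn_subset S x hz) hfg

theorem subset_image_eval_connectedComponentIn {ι : Type*} [DecidableEq ι] {π : ι → Type*}
    [∀ i, TopologicalSpace (π i)] {S : Set (∀ i, π i)} {x : ∀ i, π i} {i : ι} {s : Set (π i)}
    (hs : IsPreconnected s) (hxs : x i ∈ s) (hS : ∀ c ∈ s, update x i c ∈ S) :
    s ⊆ eval i '' connectedComponentIn S x := by
  have hline : update x i '' s ⊆ connectedComponentIn S x :=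
    (hs.image _ (continuous_const.update i continuous_id).continuousOn).subset_connectedComponentIn
      ⟨x i, hxs, update_eq_self i x⟩ (image_subset_iff.2 hS)
  exact fun c hc => ⟨update x i c, hline (mem_image_of_mem _ hc), update_self i c x⟩

theorem exists_mem_le_of_forall_notMem_exists_lt {V β : Type*} [Finite V] [LinearOrder β]
    {B : Set V} {y : V → β} (h : ∀ w ∉ B, ∃ j, y w < y j) (v : V) : ∃ w ∈ B, y v ≤ y w := by
  have : Nonempty V := ⟨v⟩
  obtain ⟨w, hw⟩ := Finite.exists_max y
  by_cases hwB : w ∈ B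
  · exact ⟨w, hwB, hw v⟩
  · obtain ⟨j, hj⟩ := h w hwB
    exact absurd (hw j) hj.not_ge

/-- The complement `M` of the Dirichlet arrangement `A(G, u)` inside `X = {x | x|_B = u}`. -/
def dirichletComplement {V : Type*} (G : SimpleGraph V) (B : Set V) (u : V → ℝ) :
    Set (V → ℝ) :=
  {x | (∀ j ∈ B, x j = u j) ∧ ∀ i j : V, G.Adj i j → x i ≠ x j}

section Dirichlet

variable {V : Type*} {G : SimpleGraph V} {B : Set V} {u : V → ℝ} {x y : V → ℝ}

theorem lt_of_adj_of_mem_connectedComponentIn {i j : V} (hij : G.Adj i j)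
    (hy : y ∈ connectedComponentIn (dirichletComplement G B u) x) (hxij : x i < x j) :
    y i < y j :=
  lt_of_mem_connectedComponentIn (continuous_apply i) (continuous_apply j)
    (fun _ hz => hz.2 i j hij) hy hxij

theorem update_mem_dirichletComplement [DecidableEq V] (hx : x ∈ dirichletComplement G B u)
    {i : V} (hi : i ∉ B) {c : ℝ} (hc : ∀ j, G.Adj i j → x j ≠ c) :
    update x i c ∈ dirichletComplement G B u := by
  refine ⟨fun j hj => ?_, fun a b hab => ?_⟩
  · rw [update_of_ne (ne_of_mem_of_not_mem hj hi)]
    exact hx.1 j hj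
  rcases eq_or_ne a i with rfl | ha
  · rw [update_self, update_of_ne hab.ne.symm]
    exact (hc b hab).symm
  rcases eq_or_ne b i with rfl | hb
  · rw [update_self, update_of_ne ha]
    exact hc a hab.symm
  rw [update_of_ne ha, update_of_ne hb]
  exact hx.2 a b hab

theorem not_isBounded_connectedComponentIn (hx : x ∈ dirichletComplement G B u) {i : V}
    (hi : i ∉ B) {s : Set ℝ} (hs : IsPreconnected s) (hxs : x i ∈ s) (hs_unbdd : ¬IsBounded s)
    (hadj : ∀ j, G.Adj i j → x j ∉ s) :
    ¬IsBounded (connectedComponentIn (dirichletComplement G B u) x) := by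
  classical
  intro hC
  refine hs_unbdd ((forall_isBounded_image_eval_iff.2 hC i).subset ?_)
  exact subset_image_eval_connectedComponentIn hs hxs fun c hc =>
    update_mem_dirichletComplement hx hi fun j hj => (ne_of_mem_of_not_mem hc (hadj j hj)).symm

theorem exists_adj_gt_of_isBounded (hx : x ∈ dirichletComplement G B u)
    (hC : IsBounded (connectedComponentIn (dirichletComplement G B u) x)) {i : V} (hi : i ∉ B) :
    ∃ j, G.Adj i j ∧ x j > x i := by
  by_contra! h
  refine not_isBounded_connectedComponentIn hx hi isPreconnected_Ici self_mem_Ici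
    (fun hs => not_bddAbove_Ici _ hs.bddAbove) (fun j hj => ?_) hC
  exact not_le.2 ((h j hj).lt_of_ne' (hx.2 i j hj))

theorem exists_adj_lt_of_isBounded (hx : x ∈ dirichletComplement G B u)
    (hC : IsBounded (connectedComponentIn (dirichletComplement G B u) x)) {i : V} (hi : i ∉ B) :
    ∃ j, G.Adj i j ∧ x j < x i := by
  by_contra! h
  refine not_isBounded_connectedComponentIn hx hi isPreconnected_Iic self_mem_Iic
    (fun hs => not_bddBelow_Iic _ hs.bddBelow) (fun j hj => ?_) hC
  exact not_le.2 ((h j hj).lt_of_ne (hx.2 i j hj))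

theorem isBounded_connectedComponentIn [Finite V]
    (h : ∀ i, i ∉ B → (∃ j, G.Adj i j ∧ x j > x i) ∧ (∃ j, G.Adj i j ∧ x j < x i)) :
    IsBounded (connectedComponentIn (dirichletComplement G B u) x) := by
  obtain ⟨a, ha⟩ := (finite_range u).bddAbove
  obtain ⟨b, hb⟩ := (finite_range u).bddBelow
  refine forall_isBounded_image_eval_iff.1 fun v => (Metric.isBounded_Icc b a).subset ?_
  rintro _ ⟨y, hy, rfl⟩
  have hyB := (connectedComponentIn_subset _ x hy).1
  have hmax : ∀ w ∉ B, ∃ j, y w < y j := fun w hw =>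
    let ⟨j, hj, hwj⟩ := (h w hw).1
    ⟨j, lt_of_adj_of_mem_connectedComponentIn hj hy hwj⟩
  have hmin : ∀ w ∉ B, ∃ j, y j < y w := fun w hw =>
    let ⟨j, hj, hjw⟩ := (h w hw).2
    ⟨j, lt_of_adj_of_mem_connectedComponentIn hj.symm hy hjw⟩
  obtain ⟨w, hwB, hvw⟩ := exists_mem_le_of_forall_notMem_exists_lt hmax v
  obtain ⟨w', hw'B, hw'v⟩ := exists_mem_le_of_forall_notMem_exists_lt (β := ℝᵒᵈ) hmin v
  exact ⟨(hb (mem_range_self w')).trans ((hyB w' hw'B).symm.trans_le hw'v),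
    hvw.trans ((hyB w hwB).trans_le (ha (mem_range_self w)))⟩

end Dirichlet

theorem dirichlet_chamber_bounded_iff_no_interior_source_sink_general
    (V : Type*) [Fintype V] (G : SimpleGraph V)
    (B : Set V)
    (u : V → ℝ)
    (M : Set (V → ℝ))
    (hM : M = {x | (∀ j ∈ B, x j = u j) ∧ ∀ i j : V, G.Adj i j → x i ≠ x j})
    (x : V → ℝ) (hx : x ∈ M) :
    Bornology.IsBounded (connectedComponentIn M x) ↔
      ∀ i : V, i ∉ B →
        (∃ j : V, G.Adj i j ∧ x j > x i) ∧ (∃ j : V, G.Adj i j ∧ x j < x i) := by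
  change M = dirichletComplement G B u at hM
  subst hM
  exact ⟨fun hC i hi => ⟨exists_adj_gt_of_isBounded hx hC hi, exists_adj_lt_of_isBounded hx hC hi⟩,
    isBounded_connectedComponentIn⟩

/-- A chamber of the Dirichlet arrangement (the connected component of a
point `x` of the complement `M`) is bounded iff the corresponding acyclic orientation
`σ(C)` (edge `ij` oriented `i → j` when `x_i > x_j`) has no sources and no sinks
among the interior vertices `V \ B`. -/
theorem dirichlet_chamber_bounded_iff_no_interior_source_sink
    (V : Type*) [Fintype V] (G : SimpleGraph V) (hconn : G.Connected)
    (B : Set V) (hB2 : 2 ≤ Nat.card B)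
    (hBindep : ∀ i ∈ B, ∀ j ∈ B, ¬ G.Adj i j)
    (u : V → ℝ) (hu : Set.InjOn u B)
    (M : Set (V → ℝ))
    (hM : M = {x | (∀ j ∈ B, x j = u j) ∧ ∀ i j : V, G.Adj i j → x i ≠ x j})
    (x : V → ℝ) (hx : x ∈ M) :
    Bornology.IsBounded (connectedComponentIn M x) ↔
      ∀ i : V, i ∉ B →
        (∃ j : V, G.Adj i j ∧ x j > x i) ∧ (∃ j : V, G.Adj i j ∧ x j < x i) :=
  dirichlet_chamber_bounded_iff_no_interior_source_sink_general V G B u M hM x hx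
end

section
/- Let G be a finite connected simple graph with independent boundary B, |B| = m ≥ 2, and injective boundary data u. The number of acyclic orientations of G that respect u equals α(Ĝ)/m!, where Ĝ is obtained from G by adding an edge between every pair of boundary nodes and α(Ĝ) = |χ_Ĝ(−1)| is the number of acyclic orientations of Ĝ. -/
/-!
An acyclic orientation of `Ĝ` is the same thing as an acyclic orientation `σ` of `G` together
with a strict total order on `B` (the orientation of the added clique) which `σ` respects: every
directed `σ`-path between boundary nodes runs along the order. Hence `α(Ĝ)` is the sum, over the
`m!` orders of `B`, of the number of orientations of `G` respecting each order, and the theorem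
follows once this number is shown not to depend on the order. Orders of `B` are bijections
`B ≃ Fin m`, and adjacent transpositions generate the symmetric group, so it suffices to exchange
two boundary nodes `i`, `j` in consecutive positions. Reversing every edge that lies on a directed
path from `i` to `j` does this: it keeps the orientation acyclic, and the reversed orientation has
the same vertices on its paths from `j` to `i`, so doing it again undoes it.
-/

namespace Relation

variable {V : Type*} {r : V → V → Prop}

def IsAcyclic (r : V → V → Prop) : Prop := ∀ v, ¬ TransGen r v v

theorem isAcyclic_of_forall_lt {α : Type*} [Preorder α] (f : V → α)
    (hf : ∀ x y, r x y → f x < f y) : IsAcyclic r := fun v hv =>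
  lt_irrefl (f v) (by simpa [transGen_eq_self] using TransGen.lift f hf v v hv)

theorem IsAcyclic.mono {s : V → V → Prop} (hr : IsAcyclic r) (hsr : ∀ x y, s x y → r x y) :
    IsAcyclic s := fun v hv => hr v (TransGen.mono hsr _ _ hv)

theorem IsAcyclic.ne_of_transGen (hr : IsAcyclic r) {x y : V} (hxy : TransGen r x y) : x ≠ y := by
  rintro rfl
  exact hr x hxy

theorem IsAcyclic.exists_rank [Finite V] (hr : IsAcyclic r) :
    ∃ f : V → ℕ, ∀ x y, r x y → f x < f y :=
  ⟨fun v => {w | TransGen r w v}.ncard, fun x y hxy =>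
    Set.ncard_lt_ncard ⟨fun _ hw => hw.tail hxy, fun hsub => hr x (hsub (.single hxy))⟩⟩

def reverseOn (S : Set V) (r : V → V → Prop) : V → V → Prop := fun x y =>
  (x ∈ S ∧ y ∈ S ∧ r y x) ∨ (¬ (x ∈ S ∧ y ∈ S) ∧ r x y)

def onPaths (r : V → V → Prop) (i j : V) : Set V :=
  {v | ReflTransGen r i v ∧ ReflTransGen r v j}

@[simp]
theorem reverseOn_reverseOn (S : Set V) (r : V → V → Prop) : reverseOn S (reverseOn S r) = r := by
  funext x y
  simp only [reverseOn, eq_iff_iff]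
  tauto

@[simp]
theorem reverseOn_empty (r : V → V → Prop) : reverseOn ∅ r = r := by
  funext x y
  simp [reverseOn]

theorem onPaths_eq_empty {i j : V} (h : ¬ ReflTransGen r i j) : onPaths r i j = ∅ :=
  Set.eq_empty_of_forall_notMem fun _ hv => h (hv.1.trans hv.2)

theorem transGen_reverseOn {S : Set V} {x y : V} (h : TransGen (reverseOn S r) x y) :
    TransGen r x y ∨ ∃ p ∈ S, ∃ q ∈ S, ReflTransGen r x p ∧ ReflTransGen r q y := by
  induction h with
  | @single b hxb =>
    rcases hxb with ⟨hx, hb, -⟩ | ⟨-, hxb⟩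
    · exact .inr ⟨x, hx, b, hb, .refl, .refl⟩
    · exact .inl (.single hxb)
  | @tail b c _ hbc ih =>
    rcases hbc with ⟨hb, hc, -⟩ | ⟨-, hbc⟩
    · rcases ih with ih | ⟨p, hp, -, -, hxp, -⟩
      · exact .inr ⟨b, hb, c, hc, ih.to_reflTransGen, .refl⟩
      · exact .inr ⟨p, hp, c, hc, hxp, .refl⟩
    · rcases ih with ih | ⟨p, hp, q, hq, hxp, hqb⟩
      · exact .inl (ih.tail hbc)
      · exact .inr ⟨p, hp, q, hq, hxp, hqb.tail hbc⟩

theorem reflTransGen_reverseOn_onPaths {i j x y : V}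
    (h : ReflTransGen (reverseOn (onPaths r i j) r) x y) :
    ReflTransGen r x y ∨ ReflTransGen r x j ∧ ReflTransGen r i y := by
  rcases reflTransGen_iff_eq_or_transGen.mp h with rfl | h
  · exact .inl .refl
  rcases transGen_reverseOn h with h | ⟨p, hp, q, hq, hxp, hqy⟩
  · exact .inl h.to_reflTransGen
  · exact .inr ⟨hxp.trans hp.2, hq.1.trans hqy⟩

theorem reflTransGen_reverseOn_of_mem_onPaths {i j a b : V} (ha : a ∈ onPaths r i j)
    (hb : b ∈ onPaths r i j) (hab : ReflTransGen r a b) :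
    ReflTransGen (reverseOn (onPaths r i j) r) b a := by
  induction hab using ReflTransGen.head_induction_on with
  | refl => exact .refl
  | @head a c hac _ ih =>
    have hc : c ∈ onPaths r i j := ⟨ha.1.tail hac, ‹ReflTransGen r c b›.trans hb.2⟩
    exact (ih hc).tail (.inl ⟨hc, ha, hac⟩)

theorem onPaths_reverseOn_onPaths {i j : V} (hji : ¬ ReflTransGen r j i) :
    onPaths (reverseOn (onPaths r i j) r) j i = onPaths r i j := by
  by_cases hij : ReflTransGen r i j
  · have hi : i ∈ onPaths r i j := ⟨.refl, hij⟩
    have hj : j ∈ onPaths r i j := ⟨hij, .refl⟩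
    ext v
    constructor
    · rintro ⟨hjv, hvi⟩
      refine ⟨?_, ?_⟩
      · rcases reflTransGen_reverseOn_onPaths hjv with h | h
        exacts [hij.trans h, h.2]
      · rcases reflTransGen_reverseOn_onPaths hvi with h | h
        exacts [h.trans hij, h.1]
    · intro hv
      exact ⟨reflTransGen_reverseOn_of_mem_onPaths hv hj hv.2,
        reflTransGen_reverseOn_of_mem_onPaths hi hv hv.1⟩
  · rw [onPaths_eq_empty hij, reverseOn_empty,
      onPaths_eq_empty fun h => hji h]

/-- Acyclicity via the lexicographic potential: vertices not reachable from `i` come first, then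
`onPaths r i j` in reverse rank order, then the rest of the vertices reachable from `i`. -/
theorem IsAcyclic.reverseOn_onPaths [Finite V] (hr : IsAcyclic r) (i j : V) :
    IsAcyclic (reverseOn (onPaths r i j) r) := by
  classical
  obtain ⟨f, hf⟩ := hr.exists_rank
  let layer : V → ℕ := fun v =>
    if v ∈ onPaths r i j then 1 else if ReflTransGen r i v then 2 else 0
  refine isAcyclic_of_forall_lt
    (fun v => toLex (layer v, if v ∈ onPaths r i j then -(f v : ℤ) else f v)) fun x y hxy => ?_
  rw [Prod.Lex.toLex_lt_toLex]
  rcases hxy with ⟨hx, hy, hyx⟩ | ⟨hxy, hrxy⟩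
  · have := hf y x hyx
    simp only [layer, hx, hy, ↓reduceIte, true_and]
    omega
  · have := hf x y hrxy
    by_cases hx : x ∈ onPaths r i j <;> by_cases hy : y ∈ onPaths r i j
    · exact absurd ⟨hx, hy⟩ hxy
    · have hiy : ReflTransGen r i y := hx.1.tail hrxy
      simp only [layer, hx, hy, hiy, ↓reduceIte]
      omega
    · have hix : ¬ ReflTransGen r i x := fun hix => hx ⟨hix, .head hrxy hy.2⟩
      simp only [layer, hx, hy, hix, ↓reduceIte]
      omega
    · by_cases hix : ReflTransGen r i x
      · simp only [layer, hx, hy, hix, hix.tail hrxy, ↓reduceIte, true_and]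
        omega
      · simp only [layer, hx, hy, hix, ↓reduceIte]
        split_ifs <;> omega

theorem not_transGen_reverseOn_onPaths {i j : V}
    (h : IsAcyclic (reverseOn (onPaths r i j) r)) :
    ¬ TransGen (reverseOn (onPaths r i j) r) i j := by
  intro hij
  have hrij : ReflTransGen r i j := by
    rcases reflTransGen_reverseOn_onPaths hij.to_reflTransGen with h | h
    exacts [h, h.1]
  exact h i (hij.trans_left
    (reflTransGen_reverseOn_of_mem_onPaths ⟨.refl, hrij⟩ ⟨hrij, .refl⟩ hrij))

variable {B : Set V}

def Respects (σ : V → V → Prop) (ρ : B → B → Prop) : Prop :=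
  ∀ a b : B, TransGen σ a b → ρ a b

theorem map_subtype_val_iff {ρ : B → B → Prop} {x y : V} :
    Relation.Map ρ (↑) (↑) x y ↔ ∃ (hx : x ∈ B) (hy : y ∈ B), ρ ⟨x, hx⟩ ⟨y, hy⟩ :=
  ⟨fun ⟨a, b, h, hax, hby⟩ => hax ▸ hby ▸ ⟨a.2, b.2, h⟩, fun ⟨_, _, h⟩ => ⟨_, _, h, rfl, rfl⟩⟩

theorem Respects.eq_or_rel {σ : V → V → Prop} {ρ : B → B → Prop} (h : Respects σ ρ) {a b : B}
    (hab : ReflTransGen σ a b) : a = b ∨ ρ a b := by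
  rcases reflTransGen_iff_eq_or_transGen.mp hab with hab | hab
  exacts [.inl (Subtype.ext hab.symm), .inr (h a b hab)]

theorem transGen_sup_map_val {σ : V → V → Prop} {ρ : B → B → Prop} [IsTrans B ρ]
    (hσρ : Respects σ ρ) {x y : V}
    (h : TransGen (fun x y => σ x y ∨ Relation.Map ρ (↑) (↑) x y) x y) :
    TransGen σ x y ∨ ∃ a b : B, ρ a b ∧ ReflTransGen σ x a ∧ ReflTransGen σ b y := by
  induction h with
  | single hxy =>
    rcases hxy with hxy | ⟨a, b, hab, rfl, rfl⟩
    exacts [.inl (.single hxy), .inr ⟨a, b, hab, .refl, .refl⟩]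
  | tail _ hyz ih =>
    rcases hyz with hyz | ⟨c, d, hcd, rfl, rfl⟩
    · rcases ih with ih | ⟨a, b, hab, hxa, hby⟩
      exacts [.inl (ih.tail hyz), .inr ⟨a, b, hab, hxa, hby.tail hyz⟩]
    · rcases ih with ih | ⟨a, b, hab, hxa, hbc⟩
      · exact .inr ⟨c, d, hcd, ih.to_reflTransGen, .refl⟩
      · refine .inr ⟨a, d, ?_, hxa, .refl⟩
        rcases hσρ.eq_or_rel hbc with rfl | hbc
        exacts [_root_.trans hab hcd, _root_.trans (_root_.trans hab hbc) hcd]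

theorem IsAcyclic.sup_map_val {σ : V → V → Prop} {ρ : B → B → Prop} [IsStrictOrder B ρ]
    (hσ : IsAcyclic σ) (hσρ : Respects σ ρ) :
    IsAcyclic (fun x y => σ x y ∨ Relation.Map ρ (↑) (↑) x y) := fun v hv => by
  rcases transGen_sup_map_val hσρ hv with hv | ⟨a, b, hab, hva, hbv⟩
  · exact hσ v hv
  · rcases hσρ.eq_or_rel (hbv.trans hva) with rfl | hba
    exacts [irrefl _ hab, asymm hab hba]

theorem Respects.not_reflTransGen {σ : V → V → Prop} {n : ℕ} {e : B ≃ Fin n}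
    (h : Respects σ (InvImage (· < ·) e)) {a b : B} (hab : e a < e b) :
    ¬ ReflTransGen σ b a := fun hba => by
  rcases h.eq_or_rel hba with rfl | hba
  exacts [lt_irrefl _ hab, lt_asymm hab hba]

end Relation

theorem isStrictTotalOrder_invImage {α β : Type*} [LinearOrder β] {f : α → β}
    (hf : Function.Injective f) : IsStrictTotalOrder α (InvImage (· < ·) f) where
  trichotomous _ _ hab hba := hf (le_antisymm (not_lt.1 hba) (not_lt.1 hab))
  irrefl a := lt_irrefl (f a)
  trans _ _ _ := lt_trans

open Classical in
noncomputable def strictTotalOrderEquiv (α : Type*) [Fintype α] :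
    {ρ : α → α → Prop // IsStrictTotalOrder α ρ} ≃ (α ≃ Fin (Fintype.card α)) where
  toFun ρ :=
    let := ρ.2
    let := linearOrderOfSTO ρ.1
    (Fintype.orderIsoFinOfCardEq α rfl).symm.toEquiv
  invFun e := ⟨InvImage (· < ·) e, isStrictTotalOrder_invImage e.injective⟩
  left_inv ρ := by
    let := ρ.2
    let := linearOrderOfSTO ρ.1
    exact Subtype.ext (funext₂ fun a b =>
      propext ((Fintype.orderIsoFinOfCardEq α rfl).symm.lt_iff_lt))
  right_inv e := by
    let : IsStrictTotalOrder α (InvImage (· < ·) e) := isStrictTotalOrder_invImage e.injective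
    let := linearOrderOfSTO (InvImage (· < ·) e)
    let e' : α ≃o Fin (Fintype.card α) :=
      { toEquiv := e
        map_rel_iff' := fun {a b} => by
          change e a ≤ e b ↔ a = b ∨ e a < e b
          rw [le_iff_eq_or_lt, e.injective.eq_iff] }
    exact congrArg RelIso.toEquiv (Subsingleton.elim _ e')

theorem card_isStrictTotalOrder (α : Type*) [Finite α] :
    Nat.card {ρ : α → α → Prop // IsStrictTotalOrder α ρ} = (Nat.card α).factorial := by
  classical
  have := Fintype.ofFinite α
  rw [Nat.card_congr (strictTotalOrderEquiv α), Nat.card_eq_fintype_card,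
    Fintype.card_equiv (Fintype.equivFin α), Nat.card_eq_fintype_card]

theorem IsStrictTotalOrder.exists_eq_invImage {α : Type*} [Finite α] {ρ : α → α → Prop}
    (hρ : IsStrictTotalOrder α ρ) : ∃ e : α ≃ Fin (Nat.card α), ρ = InvImage (· < ·) e := by
  have := Fintype.ofFinite α
  rw [Nat.card_eq_fintype_card]
  exact ⟨strictTotalOrderEquiv α ⟨ρ, hρ⟩,
    congrArg Subtype.val ((strictTotalOrderEquiv α).left_inv ⟨ρ, hρ⟩).symm⟩

open Relation

namespace SimpleGraph

variable {V : Type*}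

structure IsAcyclicOrientation (H : SimpleGraph V) (o : V → V → Prop) : Prop where
  adj : ∀ x y, o x y → H.Adj x y
  iff_not : ∀ x y, H.Adj x y → (o x y ↔ ¬ o y x)
  isAcyclic : Relation.IsAcyclic o

variable {H : SimpleGraph V} {o : V → V → Prop}

theorem isAcyclicOrientation_iff : H.IsAcyclicOrientation o ↔
    (∀ x y, o x y → H.Adj x y) ∧ (∀ x y, H.Adj x y → (o x y ↔ ¬ o y x)) ∧
      ∀ v, ¬ TransGen o v v :=
  ⟨fun ⟨h₁, h₂, h₃⟩ => ⟨h₁, h₂, h₃⟩, fun ⟨h₁, h₂, h₃⟩ => ⟨h₁, h₂, h₃⟩⟩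

theorem IsAcyclicOrientation.rel_of_transGen (ho : H.IsAcyclicOrientation o) {x y : V}
    (hxy : H.Adj x y) (h : TransGen o x y) : o x y := by
  by_contra hn
  exact ho.isAcyclic x (h.tail (not_not.mp ((ho.iff_not x y hxy).not.mp hn)))

theorem IsAcyclicOrientation.reverseOn_onPaths [Finite V] (ho : H.IsAcyclicOrientation o)
    (i j : V) : H.IsAcyclicOrientation (reverseOn (onPaths o i j) o) where
  adj := by
    rintro x y (⟨-, -, h⟩ | ⟨-, h⟩)
    exacts [(ho.adj y x h).symm, ho.adj x y h]
  iff_not x y hxy := by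
    have := ho.iff_not x y hxy
    have := ho.iff_not y x hxy.symm
    simp only [reverseOn]
    tauto
  isAcyclic := ho.isAcyclic.reverseOn_onPaths i j

theorem IsAcyclicOrientation.respects_restrict (ho : H.IsAcyclicOrientation o) {B : Set V}
    (hB : ∀ x ∈ B, ∀ y ∈ B, x ≠ y → H.Adj x y) {σ : V → V → Prop} (hσo : ∀ x y, σ x y → o x y) :
    Respects σ (fun a b : B => o a b) := fun a b h => by
  have h' : TransGen o a b := TransGen.mono hσo _ _ h
  exact ho.rel_of_transGen (hB _ a.2 _ b.2 (ho.isAcyclic.ne_of_transGen h')) h'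

theorem IsAcyclicOrientation.isStrictTotalOrder_restrict (ho : H.IsAcyclicOrientation o)
    {B : Set V} (hB : ∀ x ∈ B, ∀ y ∈ B, x ≠ y → H.Adj x y) :
    IsStrictTotalOrder B (fun a b => o a b) where
  trichotomous a b hab hba := by
    by_contra hne
    have := ho.iff_not a b (hB _ a.2 _ b.2 fun h => hne (Subtype.ext h))
    tauto
  irrefl a h := ho.isAcyclic a (.single h)
  trans a b c hab hbc := by
    have habc : TransGen o a c := .tail (.single hab) hbc
    exact ho.rel_of_transGen (hB _ a.2 _ c.2 (ho.isAcyclic.ne_of_transGen habc)) habc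

theorem IsAcyclicOrientation.inf_adj {G : SimpleGraph V} (ho : H.IsAcyclicOrientation o)
    (hGH : G ≤ H) : G.IsAcyclicOrientation (fun x y => o x y ∧ G.Adj x y) where
  adj _ _ h := h.2
  iff_not x y hxy := by
    have := ho.iff_not x y (hGH hxy)
    simp only [hxy, hxy.symm, and_true]
    exact this
  isAcyclic := ho.isAcyclic.mono fun _ _ h => h.1

variable {G Ghat : SimpleGraph V} {B : Set V}

theorem not_map_subtype_val_of_adj (hB : ∀ x ∈ B, ∀ y ∈ B, ¬ G.Adj x y) {ρ : B → B → Prop}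
    {x y : V} (hxy : G.Adj x y) : ¬ Relation.Map ρ (↑) (↑) x y :=
  fun ⟨a, b, _, hax, hby⟩ => hB _ (hax ▸ a.2) _ (hby ▸ b.2) hxy

theorem IsAcyclicOrientation.sup_map_val {σ : V → V → Prop} (hσ : G.IsAcyclicOrientation σ)
    {ρ : B → B → Prop} [IsStrictTotalOrder B ρ] (hσρ : Respects σ ρ)
    (hB : ∀ x ∈ B, ∀ y ∈ B, ¬ G.Adj x y)
    (hGhat : ∀ x y, Ghat.Adj x y ↔ G.Adj x y ∨ x ∈ B ∧ y ∈ B ∧ x ≠ y) :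
    Ghat.IsAcyclicOrientation (fun x y => σ x y ∨ Relation.Map ρ (↑) (↑) x y) where
  adj := by
    rintro x y (h | ⟨a, b, hab, rfl, rfl⟩)
    · exact (hGhat x y).2 (.inl (hσ.adj x y h))
    · exact (hGhat a b).2 (.inr ⟨a.2, b.2, fun h => irrefl_of ρ a (Subtype.ext h ▸ hab)⟩)
  iff_not x y hxy := by
    rcases (hGhat x y).1 hxy with hxy | ⟨hx, hy, hne⟩
    · simpa only [not_map_subtype_val_of_adj hB hxy, not_map_subtype_val_of_adj hB hxy.symm,
        or_false] using hσ.iff_not x y hxy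
    · have hxy' : ¬ σ x y := fun h => hB x hx y hy (hσ.adj x y h)
      have hyx' : ¬ σ y x := fun h => hB y hy x hx (hσ.adj y x h)
      simp only [hxy', hyx', false_or, map_subtype_val_iff, hx, hy, exists_true_left]
      exact ⟨asymm, fun h => (trichotomous_of ρ ⟨x, hx⟩ ⟨y, hy⟩).resolve_right
        (not_or.2 ⟨fun h' => hne (congrArg Subtype.val h'), h⟩)⟩
  isAcyclic := hσ.isAcyclic.sup_map_val hσρ

def acyclicOrientationEquivSigma (hB : ∀ x ∈ B, ∀ y ∈ B, ¬ G.Adj x y)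
    (hGhat : ∀ x y, Ghat.Adj x y ↔ G.Adj x y ∨ x ∈ B ∧ y ∈ B ∧ x ≠ y) :
    {o // Ghat.IsAcyclicOrientation o} ≃
      Σ ρ : {ρ : B → B → Prop // IsStrictTotalOrder B ρ},
        {σ // G.IsAcyclicOrientation σ ∧ Respects σ ρ.1} :=
  have hcomplete : ∀ x ∈ B, ∀ y ∈ B, x ≠ y → Ghat.Adj x y :=
    fun x hx y hy hne => (hGhat x y).2 (.inr ⟨hx, hy, hne⟩)
  { toFun o := ⟨⟨fun a b => o.1 a b, o.2.isStrictTotalOrder_restrict hcomplete⟩,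
      ⟨fun x y => o.1 x y ∧ G.Adj x y,
        o.2.inf_adj fun x y h => (hGhat x y).2 (.inl h),
        o.2.respects_restrict hcomplete fun _ _ h => h.1⟩⟩
    invFun p := ⟨fun x y => p.2.1 x y ∨ Relation.Map p.1.1 (↑) (↑) x y,
      have := p.1.2
      p.2.2.1.sup_map_val p.2.2.2 hB hGhat⟩
    left_inv o := by
      refine Subtype.ext (funext₂ fun x y => propext ⟨?_, fun h => ?_⟩)
      · rintro (h | ⟨a, b, h, rfl, rfl⟩)
        exacts [h.1, h]
      · by_cases hxy : G.Adj x y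
        · exact .inl ⟨h, hxy⟩
        · obtain ⟨hx, hy, -⟩ := ((hGhat x y).1 (o.2.adj x y h)).resolve_left hxy
          exact .inr ⟨⟨x, hx⟩, ⟨y, hy⟩, h, rfl, rfl⟩
    right_inv p := by
      obtain ⟨⟨ρ, hρ⟩, σ, hσ, hσρ⟩ := p
      refine Sigma.subtype_ext (Subtype.ext (funext₂ fun a b => propext ?_))
        (funext₂ fun x y => propext ?_)
      · simp only [map_subtype_val_iff, Subtype.coe_eta, a.2, b.2, exists_true_left,
          or_iff_right_iff_imp]
        exact fun h => absurd (hσ.adj a b h) (hB _ a.2 _ b.2)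
      · exact ⟨fun ⟨h, hxy⟩ => h.resolve_right (not_map_subtype_val_of_adj hB hxy),
          fun h => ⟨.inl h, hσ.adj x y h⟩⟩ }

variable [Finite V] {n : ℕ}

theorem IsAcyclicOrientation.respects_reverseOn_onPaths {σ : V → V → Prop}
    (hσ : G.IsAcyclicOrientation σ) {e : B ≃ Fin n} (hσe : Respects σ (InvImage (· < ·) e))
    {i j : B} (hij : (e j : ℕ) = e i + 1) :
    Respects (reverseOn (onPaths σ i j) σ)
      (InvImage (· < ·) (e.trans (Equiv.swap (e i) (e j)))) := by
  classical
  intro a b hab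
  have hacyc := hσ.isAcyclic.reverseOn_onPaths i j
  have hle : ∀ {c d : B}, ReflTransGen σ c d → (e c : ℕ) ≤ e d := fun hcd => by
    rcases hσe.eq_or_rel hcd with rfl | hcd
    exacts [le_rfl, le_of_lt hcd]
  have hne : (e a : ℕ) ≠ e b := fun h => by
    obtain rfl := e.injective (Fin.ext h)
    exact hacyc _ hab
  have hnij : ¬ ((e a : ℕ) = e i ∧ (e b : ℕ) = e j) := fun ⟨ha, hb⟩ => by
    obtain rfl := e.injective (Fin.ext ha)
    obtain rfl := e.injective (Fin.ext hb)
    exact not_transGen_reverseOn_onPaths hacyc hab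
  have hpos : (e a : ℕ) ≤ e b ∨ (e a : ℕ) ≤ e j ∧ (e i : ℕ) ≤ e b := by
    rcases reflTransGen_reverseOn_onPaths hab.to_reflTransGen with h | ⟨haj, hib⟩
    exacts [.inl (hle h), .inr ⟨hle haj, hle hib⟩]
  -- the swap reverses the order of positions only on the pair `(i, j)`, excluded by `hnij`
  simp only [InvImage, Equiv.trans_apply, Equiv.swap_apply_def, Fin.lt_def, Fin.ext_iff]
  split_ifs <;> omega

theorem card_respects_swap {e : B ≃ Fin n} {i j : B} (hij : (e j : ℕ) = e i + 1) :
    Nat.card {σ // G.IsAcyclicOrientation σ ∧ Respects σ (InvImage (· < ·) e)} =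
      Nat.card {σ // G.IsAcyclicOrientation σ ∧
        Respects σ (InvImage (· < ·) (e.trans (Equiv.swap (e i) (e j))))} := by
  set e' := e.trans (Equiv.swap (e i) (e j))
  have hi : e' i = e j := Equiv.swap_apply_left _ _
  have hj : e' j = e i := Equiv.swap_apply_right _ _
  have hji : (e' i : ℕ) = e' j + 1 := by rw [hi, hj, hij]
  have he : e'.trans (Equiv.swap (e' j) (e' i)) = e := by
    ext x
    simp [e', Equiv.swap_comm (e i) (e j)]
  refine Nat.card_congr
    { toFun σ := ⟨reverseOn (onPaths σ i j) σ, σ.2.1.reverseOn_onPaths i j,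
        σ.2.1.respects_reverseOn_onPaths σ.2.2 hij⟩
      invFun σ := ⟨reverseOn (onPaths σ j i) σ, σ.2.1.reverseOn_onPaths j i,
        he ▸ σ.2.1.respects_reverseOn_onPaths σ.2.2 hji⟩
      left_inv σ := Subtype.ext ?_
      right_inv σ := Subtype.ext ?_ }
  · dsimp only
    rw [onPaths_reverseOn_onPaths (σ.2.2.not_reflTransGen (by omega)), reverseOn_reverseOn]
  · dsimp only
    rw [onPaths_reverseOn_onPaths (σ.2.2.not_reflTransGen (by omega)), reverseOn_reverseOn]

theorem card_respects_trans_perm (e : B ≃ Fin n) (p : Equiv.Perm (Fin n)) :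
    Nat.card {σ // G.IsAcyclicOrientation σ ∧ Respects σ (InvImage (· < ·) (e.trans p))} =
      Nat.card {σ // G.IsAcyclicOrientation σ ∧ Respects σ (InvImage (· < ·) e)} := by
  cases n with
  | zero => rw [Subsingleton.elim p (Equiv.refl _), Equiv.trans_refl]
  | succ n =>
    induction (Equiv.Perm.mclosure_swap_castSucc_succ n).ge (Submonoid.mem_top p)
      using Submonoid.closure_induction generalizing e with
    | mem p hp =>
      obtain ⟨k, rfl⟩ := hp
      obtain ⟨i, hi⟩ := e.surjective k.castSucc
      obtain ⟨j, hj⟩ := e.surjective k.succ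
      dsimp only
      rw [← hi, ← hj]
      exact (card_respects_swap (by simp [hi, hj])).symm
    | one => rw [Equiv.Perm.one_def, Equiv.trans_refl]
    | mul p q _ _ hp hq => rw [Equiv.Perm.mul_def, ← Equiv.trans_assoc, hp, hq]

theorem card_respects_eq {ρ ρ' : B → B → Prop} (hρ : IsStrictTotalOrder B ρ)
    (hρ' : IsStrictTotalOrder B ρ') :
    Nat.card {σ // G.IsAcyclicOrientation σ ∧ Respects σ ρ} =
      Nat.card {σ // G.IsAcyclicOrientation σ ∧ Respects σ ρ'} := by
  obtain ⟨e, rfl⟩ := hρ.exists_eq_invImage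
  obtain ⟨e', rfl⟩ := hρ'.exists_eq_invImage
  rw [← card_respects_trans_perm e (e.symm.trans e'), ← Equiv.trans_assoc, Equiv.self_trans_symm,
    Equiv.refl_trans]

theorem card_isAcyclicOrientation_eq (hB : ∀ x ∈ B, ∀ y ∈ B, ¬ G.Adj x y)
    (hGhat : ∀ x y, Ghat.Adj x y ↔ G.Adj x y ∨ x ∈ B ∧ y ∈ B ∧ x ≠ y) {ρ : B → B → Prop}
    (hρ : IsStrictTotalOrder B ρ) :
    Nat.card {o // Ghat.IsAcyclicOrientation o} =
      (Nat.card B).factorial * Nat.card {σ // G.IsAcyclicOrientation σ ∧ Respects σ ρ} := by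
  rw [Nat.card_congr ((acyclicOrientationEquivSigma hB hGhat).trans
      (Equiv.sigmaEquivProdOfEquiv fun ρ' => (Finite.card_eq.mp (card_respects_eq ρ'.2 hρ)).some)),
    Nat.card_prod, card_isStrictTotalOrder]

end SimpleGraph

theorem semicompatible_orientation_count_general
    (V : Type*) [Fintype V] (G : SimpleGraph V)
    (B : Set V) (m : ℕ) (hm : Nat.card B = m)
    (hBindep : ∀ i ∈ B, ∀ j ∈ B, ¬ G.Adj i j)
    (u : V → ℝ) (hu : Set.InjOn u B)
    (Ghat : SimpleGraph V)
    (hGhat : ∀ i j : V, Ghat.Adj i j ↔ (G.Adj i j ∨ (i ∈ B ∧ j ∈ B ∧ i ≠ j))) :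
    Nat.card {o : V → V → Prop //
        (∀ i j : V, o i j → G.Adj i j) ∧
        (∀ i j : V, G.Adj i j → (o i j ↔ ¬ o j i)) ∧
        (∀ v : V, ¬ Relation.TransGen o v v) ∧
        (∀ i ∈ B, ∀ j ∈ B, Relation.TransGen o i j → u j < u i)} * m.factorial =
      Nat.card {o : V → V → Prop //
        (∀ i j : V, o i j → Ghat.Adj i j) ∧
        (∀ i j : V, Ghat.Adj i j → (o i j ↔ ¬ o j i)) ∧
        (∀ v : V, ¬ Relation.TransGen o v v)} := by
  have hcount := SimpleGraph.card_isAcyclicOrientation_eq hBindep hGhat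
    (isStrictTotalOrder_invImage (f := fun a : B => OrderDual.toDual (u a))
      fun a b h => Subtype.ext (hu a.2 b.2 h))
  simp only [SimpleGraph.isAcyclicOrientation_iff, Respects, InvImage, Subtype.forall,
    OrderDual.toDual_lt_toDual, and_assoc] at hcount
  rw [hcount, hm, mul_comm]

/-- The number of acyclic orientations of `G` respecting `u`
(semicompatible orientations) equals `α(Ĝ)/m!`, where `α(Ĝ)` is the number of
acyclic orientations of the graph `Ĝ` obtained from `G` by adding all edges between
boundary nodes. -/
theorem semicompatible_orientation_count
    (V : Type*) [Fintype V] (G : SimpleGraph V) (hconn : G.Connected)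
    (B : Set V) (m : ℕ) (hm : Nat.card B = m) (hm2 : 2 ≤ m)
    (hBindep : ∀ i ∈ B, ∀ j ∈ B, ¬ G.Adj i j)
    (u : V → ℝ) (hu : Set.InjOn u B)
    (Ghat : SimpleGraph V)
    (hGhat : ∀ i j : V, Ghat.Adj i j ↔ (G.Adj i j ∨ (i ∈ B ∧ j ∈ B ∧ i ≠ j))) :
    Nat.card {o : V → V → Prop //
        (∀ i j : V, o i j → G.Adj i j) ∧
        (∀ i j : V, G.Adj i j → (o i j ↔ ¬ o j i)) ∧
        (∀ v : V, ¬ Relation.TransGen o v v) ∧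
        (∀ i ∈ B, ∀ j ∈ B, Relation.TransGen o i j → u j < u i)} * m.factorial =
      Nat.card {o : V → V → Prop //
        (∀ i j : V, o i j → Ghat.Adj i j) ∧
        (∀ i j : V, Ghat.Adj i j → (o i j ↔ ¬ o j i)) ∧
        (∀ v : V, ¬ Relation.TransGen o v v)} :=
  semicompatible_orientation_count_general V G B m hm hBindep u hu Ghat hGhat
end

section
/- Let G be a finite connected simple graph with independent boundary B ⊆ V, |B| ≥ 2, and let Ĝ be obtained by adding all edges between pairs of boundary nodes. Then Ĝ is 2-connected if and only if every interior vertex of G lies on a simple path in G between two distinct boundary nodes. -/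
/-
If every interior vertex lies on a `B`–`B` path, then after deleting a vertex `v` every other
vertex still reaches `B` along the half of its path that avoids `v`, and `B` is a clique in `Ĝ`;
since `B` is independent in the connected graph `G`, `G` also has at least three vertices.

Conversely, call two paths from `u` to `B` meeting only in `u` a fan at `u`; every vertex of `B`
and every vertex on a `B`–`B` path carries one. Let `i ∉ B` be a neighbour of a vertex `u` with a
fan. A walk of `Ĝ - u` from `i` to `B`, cut at its first visit to `B` or to the fan, only uses
edges of `G`; together with the fan it gives a new fan at `u` through `i`, hence a `B`–`B` path
through `i`. Propagating this along a path of `G` from `i` to `B` proves the claim.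
-/

open SimpleGraph Walk

namespace SimpleGraph

variable {V : Type*} {G H : SimpleGraph V} {B : Set V}

def OnBoundaryPath (G : SimpleGraph V) (B : Set V) (x : V) : Prop :=
  ∃ j ∈ B, ∃ j' ∈ B, j ≠ j' ∧ ∃ p : G.Walk j j', p.IsPath ∧ x ∈ p.support

theorem Walk.IsPath.append {u v w : V} {p : G.Walk u v} {q : G.Walk v w} (hp : p.IsPath)
    (hq : q.IsPath) (h : ∀ x ∈ p.support, x ∈ q.support → x = v) : (p.append q).IsPath := by
  rw [isPath_def, support_append, List.nodup_append]
  refine ⟨hp.support_nodup, hq.support_nodup.sublist (List.tail_sublist _), ?_⟩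
  rintro x hx _ hy rfl
  obtain rfl := h x hx (List.mem_of_mem_tail hy)
  have hq' := hq.support_nodup
  rw [← q.cons_tail_support] at hq'
  exact (List.nodup_cons.1 hq').1 hy

theorem exists_walk_of_reachable_induce {s : Set V} {a b : s} (h : (H.induce s).Reachable a b) :
    ∃ W : H.Walk a b, ∀ x ∈ W.support, x ∈ s := by
  obtain ⟨p⟩ := h
  refine ⟨p.map (Embedding.induce s).toHom, fun x hx => ?_⟩
  obtain ⟨y, -, rfl⟩ := List.mem_map.1 (p.support_map _ ▸ hx)
  exact y.2

theorem three_le_card_of_not_adj [Fintype V] (hG : G.Preconnected) {a b : V} (hab : a ≠ b)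
    (hnadj : ¬G.Adj a b) : 3 ≤ Fintype.card V := by
  classical
  obtain ⟨p, hp⟩ := (hG a b).some.toPath
  have hlen : 2 ≤ p.length := by
    rcases p with _ | ⟨h, _ | _⟩
    · exact absurd rfl hab
    · exact absurd h hnadj
    · simp
  have := hp.length_lt
  omega

theorem onBoundaryPath_of_mem_support {u c₁ c₂ x : V} {a₁ : G.Walk u c₁} {a₂ : G.Walk u c₂}
    (ha₁ : a₁.IsPath) (ha₂ : a₂.IsPath) (hc₁ : c₁ ∈ B) (hc₂ : c₂ ∈ B)
    (ha : ∀ y ∈ a₁.support, y ∈ a₂.support → y = u) (hx : x ∈ a₂.support) (hxu : x ≠ u) :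
    G.OnBoundaryPath B x := by
  have hc : c₁ ≠ c₂ := by
    rintro rfl
    obtain rfl := ha _ a₁.end_mem_support a₂.end_mem_support
    simp [nil_iff_support_eq.1 (isPath_iff_nil.1 ha₂)] at hx
    exact hxu hx
  refine ⟨c₁, hc₁, c₂, hc₂, hc, a₁.reverse.append a₂, ha₁.reverse.append ha₂ ?_, ?_⟩
  · exact fun y hy => ha y (by simpa using hy)
  · exact (mem_support_append_iff _ _).2 (Or.inr hx)

theorem exists_fan_of_mem_or_onBoundaryPath {u : V} (h : u ∈ B ∨ G.OnBoundaryPath B u) :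
    ∃ c₁ ∈ B, ∃ c₂ ∈ B, ∃ (a₁ : G.Walk u c₁) (a₂ : G.Walk u c₂), a₁.IsPath ∧ a₂.IsPath ∧
      ∀ y ∈ a₁.support, y ∈ a₂.support → y = u := by
  rcases h with hu | ⟨j, hj, j', hj', -, p, hp, hup⟩
  · exact ⟨u, hu, u, hu, nil, nil, .nil, .nil, by simp⟩
  · obtain ⟨q, r, hq, hr, rfl⟩ := hp.mem_support_iff_exists_append.1 hup
    refine ⟨j, hj, j', hj', q.reverse, r, hq.reverse, hr, fun y hy₁ hy₂ => ?_⟩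
    by_contra hyu
    exact hp.ne_of_mem_support_of_append hyu (by simpa using hy₁) hy₂ rfl

theorem exists_walk_to_boundary_avoiding {a v : V} (h : a ∈ B ∨ G.OnBoundaryPath B a)
    (hav : a ≠ v) : ∃ c ∈ B, ∃ p : G.Walk a c, v ∉ p.support := by
  rcases h with ha | ⟨j, hj, j', hj', -, p, hp, hap⟩
  · exact ⟨a, ha, nil, by simpa using hav.symm⟩
  · obtain ⟨q, r, -, -, rfl⟩ := hp.mem_support_iff_exists_append.1 hap
    by_cases hvr : v ∈ r.support
    · refine ⟨j, hj, q.reverse, fun hvq => ?_⟩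
      exact hp.ne_of_mem_support_of_append hav.symm (by simpa using hvq) hvr rfl
    · exact ⟨j', hj', r, hvr⟩

theorem exists_walk_to_set {S : Set V} (hS : ∀ x y, x ∉ S → H.Adj x y → G.Adj x y) {i b : V}
    (W : H.Walk i b) (hi : i ∉ S) (hb : b ∈ S) :
    ∃ w ∈ S, ∃ r : G.Walk i w, r.support ⊆ W.support ∧ ∀ x ∈ r.support, x ∈ S → x = w := by
  induction W with
  | nil => exact absurd hb hi
  | @cons i x b h W ih =>
    by_cases hx : x ∈ S
    · refine ⟨x, hx, cons (hS i x hi h) nil, ?_, ?_⟩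
      · simp
      · simp only [support_cons, support_nil, List.mem_cons, List.not_mem_nil, or_false]
        rintro y (rfl | rfl) hy
        exacts [absurd hy hi, rfl]
    · obtain ⟨w, hw, r, hrW, hrS⟩ := ih hx hb
      refine ⟨w, hw, cons (hS i x hi h) r, ?_, ?_⟩
      · simpa using List.subset_cons_of_subset _ hrW
      · simp only [support_cons, List.mem_cons]
        rintro y (rfl | hy) hyS
        exacts [absurd hyS hi, hrS y hy hyS]

theorem exists_path_to_set {S : Set V} (hS : ∀ x y, x ∉ S → H.Adj x y → G.Adj x y) {i b : V}
    (W : H.Walk i b) (hi : i ∉ S) (hb : b ∈ S) :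
    ∃ w ∈ S, ∃ r : G.Walk i w,
      r.IsPath ∧ r.support ⊆ W.support ∧ ∀ x ∈ r.support, x ∈ S → x = w := by
  classical
  obtain ⟨w, hw, r, hrW, hrS⟩ := exists_walk_to_set hS W hi hb
  exact ⟨w, hw, r.bypass, r.bypass_isPath, fun x hx => hrW (r.support_bypass_subset_support hx),
    fun x hx => hrS x (r.support_bypass_subset_support hx)⟩

theorem onBoundaryPath_of_adj_of_path_to_fan {u i w c₁ c₂ : V} {a₁ : G.Walk u c₁} {a₂ : G.Walk u c₂}
    (ha₁ : a₁.IsPath) (ha₂ : a₂.IsPath) (hc₁ : c₁ ∈ B) (hc₂ : c₂ ∈ B)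
    (ha : ∀ y ∈ a₁.support, y ∈ a₂.support → y = u) (hui : G.Adj u i) {r : G.Walk i w}
    (hr : r.IsPath) (hur : u ∉ r.support)
    (hrS : ∀ x ∈ r.support, x ∈ B ∨ x ∈ a₁.support ∨ x ∈ a₂.support → x = w)
    (hw : w ∈ B ∨ w ∈ a₂.support) (hw₁ : w ∉ a₁.support) : G.OnBoundaryPath B i := by
  have hwu : w ≠ u := by
    rintro rfl
    exact hur r.end_mem_support
  obtain ⟨c, hc, s, hs, hsa₂, hus⟩ : ∃ c ∈ B, ∃ s : G.Walk w c, s.IsPath ∧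
      (∀ x ∈ s.support, x = w ∨ x ∈ a₂.support) ∧ u ∉ s.support := by
    rcases hw with hwB | hwa₂
    · exact ⟨w, hwB, nil, .nil, by simp, by simpa using hwu.symm⟩
    · obtain ⟨q, s, -, hs, rfl⟩ := ha₂.mem_support_iff_exists_append.1 hwa₂
      exact ⟨c₂, hc₂, s, hs, fun x hx => Or.inr ((mem_support_append_iff _ _).2 (Or.inr hx)),
        fun hus => ha₂.ne_of_mem_support_of_append hwu.symm q.start_mem_support hus rfl⟩
  have hrs : ∀ x ∈ r.support, x ∈ s.support → x = w := fun x hx hxs =>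
    (hsa₂ x hxs).elim id fun h => hrS x hx (Or.inr (Or.inr h))
  -- `u → i ⇝ w ⇝ c` replaces `a₂` as the second branch of a fan at `u`, now through `i`.
  have ha₂' : (cons hui (r.append s)).IsPath :=
    (hr.append hs hrs).cons (by simp [mem_support_append_iff, hur, hus])
  refine onBoundaryPath_of_mem_support ha₁ ha₂' hc₁ hc (fun y hy₁ hy₂ => ?_) (by simp)
    hui.ne.symm
  rw [support_cons, List.mem_cons, mem_support_append_iff] at hy₂
  rcases hy₂ with rfl | hyr | hys
  · rfl
  · exact absurd (hrS y hyr (Or.inr (Or.inl hy₁)) ▸ hy₁) hw₁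
  · rcases hsa₂ y hys with rfl | hya₂
    · exact absurd hy₁ hw₁
    · exact ha y hy₁ hya₂

theorem onBoundaryPath_of_adj_fan (hHG : ∀ x y, x ∉ B → H.Adj x y → G.Adj x y)
    {u i b c₁ c₂ : V} (hH : (H.induce {w | w ≠ u}).Preconnected) (hb : b ∈ B) (hbu : b ≠ u)
    {a₁ : G.Walk u c₁} {a₂ : G.Walk u c₂} (ha₁ : a₁.IsPath) (ha₂ : a₂.IsPath) (hc₁ : c₁ ∈ B)
    (hc₂ : c₂ ∈ B) (ha : ∀ y ∈ a₁.support, y ∈ a₂.support → y = u) (hui : G.Adj u i)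
    (hi : i ∉ B) : G.OnBoundaryPath B i := by
  have ha' : ∀ y ∈ a₂.support, y ∈ a₁.support → y = u := fun y h₂ h₁ => ha y h₁ h₂
  have hiu : i ≠ u := hui.ne.symm
  by_cases hi₁ : i ∈ a₁.support
  · exact onBoundaryPath_of_mem_support ha₂ ha₁ hc₂ hc₁ ha' hi₁ hiu
  by_cases hi₂ : i ∈ a₂.support
  · exact onBoundaryPath_of_mem_support ha₁ ha₂ hc₁ hc₂ ha hi₂ hiu
  obtain ⟨W, hWu⟩ := exists_walk_of_reachable_induce (hH ⟨i, hiu⟩ ⟨b, hbu⟩)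
  obtain ⟨w, hwS, r, hr, hrW, hrS⟩ :=
    exists_path_to_set (S := {x | x ∈ B ∨ x ∈ a₁.support ∨ x ∈ a₂.support})
      (fun x y hx => hHG x y fun h => hx (Or.inl h)) W (by simp [hi, hi₁, hi₂]) (Or.inl hb)
  have hur : u ∉ r.support := fun h => hWu u (hrW h) rfl
  by_cases hw₁ : w ∈ a₁.support
  · have hw₂ : w ∉ a₂.support := fun h => hur (ha w hw₁ h ▸ r.end_mem_support)
    exact onBoundaryPath_of_adj_of_path_to_fan ha₂ ha₁ hc₂ hc₁ ha' hui hr hur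
      (fun x hx h => hrS x hx (by tauto)) (Or.inr hw₁) hw₂
  · exact onBoundaryPath_of_adj_of_path_to_fan ha₁ ha₂ hc₁ hc₂ ha hui hr hur hrS
      (hwS.imp_right (·.resolve_left hw₁)) hw₁

theorem mem_or_onBoundaryPath_of_preconnected_induce_ne
    (hHG : ∀ x y, x ∉ B → H.Adj x y → G.Adj x y) (hG : G.Preconnected) (hB : 1 < B.ncard) (hH : ∀ v, (H.induce {w | w ≠ v}).Preconnected)
    (x : V) : x ∈ B ∨ G.OnBoundaryPath B x := by
  obtain ⟨b, hb⟩ := Set.nonempty_of_ncard_ne_zero (by omega : B.ncard ≠ 0)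
  obtain ⟨p⟩ := hG x b
  induction p with
  | nil => exact Or.inl hb
  | @cons x y b hxy p ih =>
    refine or_iff_not_imp_left.2 fun hx => ?_
    obtain ⟨c₁, hc₁, c₂, hc₂, a₁, a₂, ha₁, ha₂, ha⟩ := exists_fan_of_mem_or_onBoundaryPath (ih hb)
    obtain ⟨b', hb', hb'y⟩ := Set.exists_ne_of_one_lt_ncard hB y
    exact onBoundaryPath_of_adj_fan hHG (hH y) hb' hb'y ha₁ ha₂ hc₁ hc₂ ha hxy.symm hx

theorem preconnected_induce_ne (hGH : G ≤ H) (hBH : ∀ x ∈ B, ∀ y ∈ B, x ≠ y → H.Adj x y)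
    (hB : ∀ x, x ∈ B ∨ G.OnBoundaryPath B x) (v : V) :
    (H.induce {w | w ≠ v}).Preconnected := by
  have reach_boundary (a : {w | w ≠ v}) :
      ∃ c : {w | w ≠ v}, c.1 ∈ B ∧ (H.induce {w | w ≠ v}).Reachable a c := by
    obtain ⟨c, hc, p, hvp⟩ := exists_walk_to_boundary_avoiding (hB a) a.2
    have hp : ∀ x ∈ (p.mapLe hGH).support, x ∈ {w | w ≠ v} := by
      rintro x hx rfl
      exact hvp (support_mapLe_eq_support hGH p ▸ hx)
    exact ⟨_, hc, ⟨(p.mapLe hGH).induce _ hp⟩⟩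
  intro a b
  obtain ⟨c, hc, hac⟩ := reach_boundary a
  obtain ⟨d, hd, hbd⟩ := reach_boundary b
  have hcd : (H.induce {w | w ≠ v}).Reachable c d := by
    by_cases h : c = d
    · exact h ▸ .rfl
    · exact Adj.reachable (hBH c hc d hd (Subtype.coe_injective.ne h))
  exact hac.trans (hcd.trans hbd.symm)

end SimpleGraph

/-- `Ĝ` (obtained from `G` by adding all edges between boundary nodes)
is 2-connected iff every interior vertex of `G` lies on a simple path in `G` between
two distinct boundary nodes. -/
theorem ghat_two_connected_iff
    (V : Type*) [Fintype V] (G : SimpleGraph V) (hconn : G.Connected)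
    (B : Set V) (hB2 : 2 ≤ Nat.card B)
    (hBindep : ∀ i ∈ B, ∀ j ∈ B, ¬ G.Adj i j)
    (Ghat : SimpleGraph V)
    (hGhat : ∀ i j : V, Ghat.Adj i j ↔ (G.Adj i j ∨ (i ∈ B ∧ j ∈ B ∧ i ≠ j))) :
    (3 ≤ Fintype.card V ∧ ∀ v : V, (Ghat.induce {w : V | w ≠ v}).Connected) ↔
      ∀ i : V, i ∉ B →
        ∃ j ∈ B, ∃ j' ∈ B, j ≠ j' ∧
          ∃ p : G.Walk j j', p.IsPath ∧ i ∈ p.support := by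
  have hB : 1 < B.ncard := by rwa [← Nat.card_coe_set_eq]
  have hHG : ∀ x y, x ∉ B → Ghat.Adj x y → G.Adj x y := fun x y hx h =>
    ((hGhat x y).1 h).resolve_right fun h' => hx h'.1
  constructor
  · rintro ⟨-, h2c⟩ i hi
    refine (mem_or_onBoundaryPath_of_preconnected_induce_ne hHG hconn.preconnected hB
      (fun v => (h2c v).preconnected) i).resolve_left hi
  · intro h
    obtain ⟨b₁, b₂, hb₁, hb₂, hb⟩ := (Set.one_lt_ncard_iff B.toFinite).1 hB
    have hcard := three_le_card_of_not_adj hconn.preconnected hb (hBindep b₁ hb₁ b₂ hb₂)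
    refine ⟨hcard, fun v => (connected_iff _).2 ⟨?_, ?_⟩⟩
    · exact preconnected_induce_ne (fun x y h => (hGhat x y).2 (.inl h))
        (fun x hx y hy hxy => (hGhat x y).2 (.inr ⟨hx, hy, hxy⟩))
        (fun x => or_iff_not_imp_left.2 (h x)) v
    · obtain ⟨x, hx⟩ := Fintype.exists_ne_of_one_lt_card (by omega) v
      exact ⟨⟨x, hx⟩⟩
end

section
/- Let G be a finite connected simple graph with independent boundary B, |B| ≥ 2, and let G_I be the induced subgraph on the interior I = V \ B, with ψ : I → finite subsets of ℝ given by ψ(i) = {u(j) : j ∈ B, j adjacent to i}. Suppose G_I admits a weighted elimination ordering: a perfect elimination ordering i_1,…,i_n of G_I such that whenever i_r is adjacent to i_s with r < s, ψ(i_r) ⊆ ψ(i_s). Then the graph Ĝ obtained from G by adding all edges between boundary nodes is chordal. -/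
/-- If the interior graph `G_I` together with the boundary-value sets
`ψ(i) = {u j : j ∈ B, j ∼ i}` admits a weighted elimination ordering (a perfect
elimination ordering `π` of `G_I` with `ψ(π r) ⊆ ψ(π s)` whenever `π r ∼ π s` and
`r < s`), then `Ĝ` (all boundary pairs joined) is chordal, i.e. admits a perfect
elimination ordering. -/
theorem weighted_elimination_ordering_implies_ghat_chordal
    (V : Type*) [Fintype V] (G : SimpleGraph V) (hconn : G.Connected)
    (B : Set V) (hB2 : 2 ≤ Nat.card B)
    (hBindep : ∀ i ∈ B, ∀ j ∈ B, ¬ G.Adj i j)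
    (u : V → ℝ) (hu : Set.InjOn u B)
    (Ghat : SimpleGraph V)
    (hGhat : ∀ i j : V, Ghat.Adj i j ↔ (G.Adj i j ∨ (i ∈ B ∧ j ∈ B ∧ i ≠ j)))
    (ψ : V → Set ℝ) (hψ : ∀ i : V, ψ i = {y : ℝ | ∃ j ∈ B, G.Adj j i ∧ y = u j})
    (n : ℕ) (hn : Nat.card {v : V // v ∉ B} = n)
    (π : Fin n ≃ {v : V // v ∉ B})
    -- perfect elimination ordering of the interior graph
    (hpeo : ∀ r s t : Fin n, r < s → r < t → s ≠ t →
      G.Adj (π r).1 (π s).1 → G.Adj (π r).1 (π t).1 → G.Adj (π s).1 (π t).1)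
    -- weighted condition
    (hweight : ∀ r s : Fin n, r < s → G.Adj (π r).1 (π s).1 → ψ (π r).1 ⊆ ψ (π s).1) :
    ∃ ρ : Fin (Fintype.card V) ≃ V,
      ∀ r s t : Fin (Fintype.card V), r < s → r < t → s ≠ t →
        Ghat.Adj (ρ r) (ρ s) → Ghat.Adj (ρ r) (ρ t) → Ghat.Adj (ρ s) (ρ t) := by
  classical
  set m := Fintype.card {v : V // ¬ v ∉ B} with hm
  have hcard : Fintype.card V = n + m := by
    rw [← hn, Nat.card_eq_fintype_card]
    rw [← Fintype.card_congr (Equiv.sumCompl (fun v : V => v ∉ B)), Fintype.card_sum]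
  set τ : Fin m ≃ {v : V // ¬ v ∉ B} := (Fintype.equivFin _).symm with hτ
  set ρ : Fin (Fintype.card V) ≃ V :=
    ((finCongr hcard).trans (finSumFinEquiv.symm.trans
      ((Equiv.sumCongr π τ).trans (Equiv.sumCompl fun v : V => v ∉ B)))) with hρ
  refine ⟨ρ, ?_⟩
  intro r s t hrs hrt hst hA1 hA2
  -- decode positions
  have key : ∀ i : Fin (Fintype.card V),
      (∃ a : Fin n, finSumFinEquiv.symm (finCongr hcard i) = Sum.inl a ∧
        ρ i = (π a).1 ∧ (i : ℕ) = (a : ℕ)) ∨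
      (∃ a : Fin m, finSumFinEquiv.symm (finCongr hcard i) = Sum.inr a ∧
        ρ i = (τ a).1 ∧ (i : ℕ) = n + (a : ℕ)) := by
    intro i
    rcases hc : finSumFinEquiv.symm (finCongr hcard i) with a | a
    · left
      refine ⟨a, rfl, ?_, ?_⟩
      · simp only [hρ, Equiv.trans_apply, Equiv.sumCongr_apply]
        rw [hc]
        simp
      · have := congrArg finSumFinEquiv hc
        simp [finSumFinEquiv_apply_left] at this
        have := congrArg Fin.val this
        simpa using this
    · right
      refine ⟨a, rfl, ?_, ?_⟩
      · simp only [hρ, Equiv.trans_apply, Equiv.sumCongr_apply]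
        rw [hc]
        simp
      · have := congrArg finSumFinEquiv hc
        simp [finSumFinEquiv_apply_right] at this
        have := congrArg Fin.val this
        simpa [Fin.natAdd] using this
  have hρne : ρ s ≠ ρ t := fun h => hst (ρ.injective h)
  -- helper: vertex at inr position is in B
  have hmemB : ∀ (a : Fin m), (τ a).1 ∈ B := fun a => not_not.mp (τ a).2
  -- helper: if ρ i ∉ B then Ghat.Adj (ρ i) x → G.Adj (ρ i) x
  have hGadj : ∀ (x y : V), x ∉ B → Ghat.Adj x y → G.Adj x y := by
    intro x y hx h
    rcases (hGhat x y).mp h with h | ⟨hx', _⟩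
    · exact h
    · exact absurd hx' hx
  rcases key r with ⟨a, hca, hra, hva⟩ | ⟨a, hca, hra, hva⟩
  · -- r is interior
    have hGrs : G.Adj (ρ r) (ρ s) := hGadj _ _ (by rw [hra]; exact (π a).2) hA1
    have hGrt : G.Adj (ρ r) (ρ t) := hGadj _ _ (by rw [hra]; exact (π a).2) hA2
    rcases key s with ⟨b, hcb, hrb, hvb⟩ | ⟨b, hcb, hrb, hvb⟩ <;>
      rcases key t with ⟨c, hcc, hrc, hvc⟩ | ⟨c, hcc, hrc, hvc⟩
    · -- both interior: use hpeo
      have hab : a < b := by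
        have := hrs
        rw [Fin.lt_def] at this ⊢
        omega
      have hac : a < c := by
        have := hrt
        rw [Fin.lt_def] at this ⊢
        omega
      have hbc : b ≠ c := by
        intro h
        apply hst
        apply Fin.ext
        rw [hvb, hvc, h]
      rw [hra, hrb] at hGrs
      rw [hra, hrc] at hGrt
      rw [hrb, hrc]
      exact (hGhat _ _).mpr (Or.inl (hpeo a b c hab hac hbc hGrs hGrt))
    · -- s interior, t boundary
      have hab : a < b := by
        have := hrs
        rw [Fin.lt_def] at this ⊢
        omega
      rw [hra, hrb] at hGrs
      rw [hra, hrc] at hGrt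
      have htB : (τ c).1 ∈ B := hmemB c
      have hmem : u (τ c).1 ∈ ψ (π a).1 := by
        rw [hψ]; exact ⟨(τ c).1, htB, hGrt.symm, rfl⟩
      have hmem2 := hweight a b hab hGrs hmem
      rw [hψ] at hmem2
      obtain ⟨j, hjB, hjadj, hju⟩ := hmem2
      have : j = (τ c).1 := hu hjB htB hju.symm
      rw [this] at hjadj
      rw [hrb, hrc]
      exact (hGhat _ _).mpr (Or.inl hjadj.symm)
    · -- s boundary, t interior
      have hac : a < c := by
        have := hrt
        rw [Fin.lt_def] at this ⊢
        omega
      rw [hra, hrb] at hGrs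
      rw [hra, hrc] at hGrt
      have hsB : (τ b).1 ∈ B := hmemB b
      have hmem : u (τ b).1 ∈ ψ (π a).1 := by
        rw [hψ]; exact ⟨(τ b).1, hsB, hGrs.symm, rfl⟩
      have hmem2 := hweight a c hac hGrt hmem
      rw [hψ] at hmem2
      obtain ⟨j, hjB, hjadj, hju⟩ := hmem2
      have : j = (τ b).1 := hu hjB hsB hju.symm
      rw [this] at hjadj
      rw [hrb, hrc]
      exact (hGhat _ _).mpr (Or.inl hjadj)
    · -- both boundary
      exact (hGhat _ _).mpr (Or.inr ⟨hrb ▸ hmemB b, hrc ▸ hmemB c, hρne⟩)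
  · -- r is boundary; then s, t are boundary too
    rcases key s with ⟨b, hcb, hrb, hvb⟩ | ⟨b, hcb, hrb, hvb⟩
    · exfalso
      have := hrs
      rw [Fin.lt_def] at this
      have hb := b.2
      omega
    rcases key t with ⟨c, hcc, hrc, hvc⟩ | ⟨c, hcc, hrc, hvc⟩
    · exfalso
      have := hrt
      rw [Fin.lt_def] at this
      have hc := c.2
      omega
    exact (hGhat _ _).mpr (Or.inr ⟨hrb ▸ hmemB b, hrc ▸ hmemB c, hρne⟩)
end

section
/- Let H be a chordal graph and K a clique of H. Then H admits a perfect elimination ordering in which the vertices of K appear last. -/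
/-!
Every graph with a perfect elimination ordering has, outside any clique `C` that does not
contain all vertices, a simplicial vertex. Along the ordering `v :: l`: if `v ∉ C`, `v` itself
will do; otherwise recurse on `l` with the clique `N` of later neighbours of `v`. If `l ⊆ N` the
graph is complete; if not, the vertex found is simplicial in `l`, not adjacent to `v`, hence
simplicial in `v :: l` and outside `C`. Eliminating such vertices one at a time and ending with
the clique gives the required ordering.
-/

open List

theorem List.Perm.exists_equiv_ofFn_eq {α : Type*} {n : ℕ} {l : List α} {π : Fin n ≃ α}
    (h : l ~ List.ofFn π) : ∃ σ : Fin n ≃ α, List.ofFn σ = l := by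
  have hlen : l.length = n := by simpa using h.length_eq
  have hnd : l.Nodup := h.nodup_iff.2 (List.nodup_ofFn.2 π.injective)
  have hmem : ∀ x, x ∈ l := fun x => h.mem_iff.2 (List.mem_ofFn.2 ⟨π.symm x, by simp⟩)
  subst hlen
  exact ⟨.ofBijective _ (hnd.getBijectionOfForallMemList l hmem).2, List.ofFn_get l⟩

namespace SimpleGraph

variable {V : Type*} {G : SimpleGraph V}

variable (G) in
def IsPerfectEliminationOrder : List V → Prop
  | [] => True
  | v :: l => G.IsClique {a ∈ l | G.Adj v a} ∧ IsPerfectEliminationOrder l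

theorem IsPerfectEliminationOrder.sublist {l₁ l₂ : List V} (h : l₁ <+ l₂)
    (hp : G.IsPerfectEliminationOrder l₂) : G.IsPerfectEliminationOrder l₁ := by
  induction h with
  | slnil => trivial
  | cons _ _ ih => exact ih hp.2
  | cons_cons _ h ih =>
    exact And.intro (hp.1.subset fun _ ha => And.intro (h.subset ha.1) ha.2) (ih hp.2)

theorem isPerfectEliminationOrder_ofFn_iff {n : ℕ} {f : Fin n → V} (hf : f.Injective) :
    G.IsPerfectEliminationOrder (List.ofFn f) ↔ ∀ r s t : Fin n, r < s → r < t → s ≠ t →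
      G.Adj (f r) (f s) → G.Adj (f r) (f t) → G.Adj (f s) (f t) := by
  induction n with
  | zero => simp [IsPerfectEliminationOrder]
  | succ n ih =>
    rw [List.ofFn_succ, IsPerfectEliminationOrder,
      ih (f := fun i => f i.succ) (hf.comp (Fin.succ_injective n))]
    simp only [Fin.forall_fin_succ, Set.Pairwise, Set.mem_ofPred_eq, List.mem_ofFn, and_imp,
      forall_exists_index, forall_apply_eq_imp_iff, hf.ne_iff, Fin.succ_lt_succ_iff, Fin.succ_pos,
      Fin.not_lt_zero, IsEmpty.forall_iff, implies_true, true_and, forall_const]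
    grind

theorem setOf_mem_cons_adj_of_not_adj {v w : V} {l : List V} (h : ¬G.Adj w v) :
    {a ∈ v :: l | G.Adj w a} = {a ∈ l | G.Adj w a} := by
  ext a
  simp only [Set.mem_ofPred_eq, List.mem_cons, and_congr_left_iff, or_iff_right_iff_imp]
  rintro ha rfl
  exact absurd ha h

theorem IsPerfectEliminationOrder.exists_simplicial_not_mem {l : List V} {C : Set V}
    (hl : l.Nodup) (hp : G.IsPerfectEliminationOrder l) (hC : G.IsClique C)
    (hlC : ∃ x ∈ l, x ∉ C) : ∃ w ∈ l, w ∉ C ∧ G.IsClique {a ∈ l | G.Adj w a} := by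
  induction l generalizing C with
  | nil => simp at hlC
  | cons v l ih =>
    by_cases hvC : v ∈ C
    swap
    · refine ⟨v, List.mem_cons_self, hvC, ?_⟩
      rw [setOf_mem_cons_adj_of_not_adj G.irrefl]
      exact hp.1
    set N := {a ∈ l | G.Adj v a}
    by_cases hN : ∃ x ∈ l, x ∉ N
    · obtain ⟨w, hw, hwN, hw_simplicial⟩ := ih hl.of_cons hp.2 hp.1 hN
      have hwv : ¬G.Adj w v := fun h => hwN ⟨hw, h.symm⟩
      refine ⟨w, List.mem_cons_of_mem v hw, fun hwC => hwv ?_, ?_⟩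
      · exact hC hwC hvC fun h => (List.nodup_cons.1 hl).1 (h ▸ hw)
      · rw [setOf_mem_cons_adj_of_not_adj hwv]
        exact hw_simplicial
    · push Not at hN
      obtain ⟨x, hx, hxC⟩ := hlC
      have hclique : G.IsClique (insert v N) := isClique_insert.2 ⟨hp.1, fun b hb _ => hb.2⟩
      exact ⟨x, hx, hxC, hclique.subset fun a ha => (List.mem_cons.1 ha.1).imp_right (hN a)⟩

theorem IsPerfectEliminationOrder.exists_perm_clique_last [DecidableEq V] {l : List V}
    (C : Set V) (hl : l.Nodup) (hp : G.IsPerfectEliminationOrder l) (hC : G.IsClique C) :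
    ∃ l', l' ~ l ∧ G.IsPerfectEliminationOrder l' ∧
      l'.Pairwise (fun a b => a ∈ C → b ∈ C) := by
  by_cases hlC : ∃ x ∈ l, x ∉ C
  swap
  · push Not at hlC
    exact ⟨l, .refl l, hp, List.pairwise_of_forall_mem_list fun _ _ b hb _ => hlC b hb⟩
  obtain ⟨v, hv, hvC, hv_simplicial⟩ := hp.exists_simplicial_not_mem hl hC hlC
  obtain ⟨l', hperm, hp', hlast⟩ :=
    (hp.sublist (l.erase_sublist (a := v))).exists_perm_clique_last C (hl.erase v) hC
  refine ⟨v :: l', (hperm.cons v).trans (List.perm_cons_erase hv).symm, ?_,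
    List.pairwise_cons.2 ⟨fun _ _ h => absurd h hvC, hlast⟩⟩
  exact And.intro
    (hv_simplicial.subset fun _ ha => And.intro (List.mem_of_mem_erase (hperm.subset ha.1)) ha.2)
    hp'
termination_by l.length
decreasing_by exact List.length_erase_of_mem hv ▸ Nat.pred_lt (List.length_pos_of_mem hv).ne'

end SimpleGraph

/-- Rose's lemma: A chordal graph `H` with a clique `K` admits a
perfect elimination ordering in which the vertices of `K` appear last. -/
theorem chordal_peo_with_clique_last
    (W : Type*) [Fintype W] (H : SimpleGraph W)
    (hchordal : ∃ π : Fin (Fintype.card W) ≃ W,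
      ∀ r s t : Fin (Fintype.card W), r < s → r < t → s ≠ t →
        H.Adj (π r) (π s) → H.Adj (π r) (π t) → H.Adj (π s) (π t))
    (K : Set W) (hK : H.IsClique K) :
    ∃ π : Fin (Fintype.card W) ≃ W,
      (∀ r s t : Fin (Fintype.card W), r < s → r < t → s ≠ t →
        H.Adj (π r) (π s) → H.Adj (π r) (π t) → H.Adj (π s) (π t)) ∧
      (∀ r s : Fin (Fintype.card W), π r ∉ K → π s ∈ K → r < s) := by
  classical
  obtain ⟨π, hπ⟩ := hchordal
  have hpeo := (SimpleGraph.isPerfectEliminationOrder_ofFn_iff π.injective).2 hπ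
  obtain ⟨l, hperm, hpeo', hKlast⟩ := 
    hpeo.exists_perm_clique_last K (List.nodup_ofFn.2 π.injective) hK
  obtain ⟨σ, rfl⟩ := hperm.exists_equiv_ofFn_eq
  refine ⟨σ, (SimpleGraph.isPerfectEliminationOrder_ofFn_iff σ.injective).1 hpeo', ?_⟩
  intro r s hr hs
  refine lt_of_le_of_ne (not_lt.1 fun hsr => hr ?_) fun h => hr (h ▸ hs)
  exact List.pairwise_ofFn.1 hKlast hsr hs
end

section
/- Let A be a finite set of hyperplanes in ℝ^n, each defined by an affine functional f_H with rational coefficients, such that A is essential, and let ε : A → ℚ_{>0}. Let V ⊆ ℂ^n be the set of critical points of the master function Φ(x) = ∑_H ε_H log f_H(x) on the complement of the complexified arrangement. If every critical point is real (as guaranteed by Varchenko's theorem), then every critical point has coordinates that are totally real algebraic numbers, i.e., algebraic numbers all of whose Galois conjugates over ℚ are real. -/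
/-!
Field automorphisms of `ℂ` fix `ℚ`, so they permute the critical points; hence every
conjugate of a coordinate of a critical point is again such a coordinate, and so is real.
Conjugates exist in abundance since `ℂ` is algebraically closed and uncountable: two
numbers with the same annihilating ideal in `ℚ[X]` are exchanged by an automorphism,
obtained by matching transcendence bases over the countable ring they generate. A
transcendental coordinate `x` would thus be conjugate to the non-real number `x + i`.
-/

open Cardinal Polynomial

universe u

theorem IsAlgClosed.nonempty_algEquiv_of_countable {R : Type*} {K L : Type u}
    [CommRing R] [Countable R] [Field K] [Field L] [Algebra R K] [Algebra R L]
    [FaithfulSMul R K] [FaithfulSMul R L] [IsAlgClosed K] [IsAlgClosed L]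
    (hK : ℵ₀ < #K) (hKL : #K = #L) : Nonempty (K ≃ₐ[R] L) := by
  have := RingHom.domain_nontrivial (algebraMap R K)
  obtain ⟨s, hs⟩ := exists_isTranscendenceBasis R K
  obtain ⟨t, ht⟩ := exists_isTranscendenceBasis R L
  have hs_card := cardinal_eq_cardinal_transcendence_basis_of_aleph0_lt _ hs mk_le_aleph0 hK
  have ht_card := cardinal_eq_cardinal_transcendence_basis_of_aleph0_lt _ ht mk_le_aleph0
    (hKL ▸ hK)
  rw [lift_id, lift_id] at hs_card ht_card
  obtain ⟨e⟩ : Nonempty (s ≃ t) := Cardinal.eq.1 (by rw [← hs_card, ← ht_card, hKL])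
  have := isAlgClosure_of_transcendence_basis _ hs
  have := isAlgClosure_of_transcendence_basis _ ht
  let e' : Algebra.adjoin R (Set.range ((↑) : s → K)) ≃ₐ[R]
      Algebra.adjoin R (Set.range ((↑) : t → L)) :=
    (hs.1.aevalEquiv.symm.trans (MvPolynomial.renameEquiv R e)).trans ht.1.aevalEquiv
  refine ⟨AlgEquiv.ofRingEquiv (f := IsAlgClosure.equivOfEquiv K L e'.toRingEquiv) fun a => ?_⟩
  rw [IsScalarTower.algebraMap_apply R (Algebra.adjoin R (Set.range ((↑) : s → K))) K,
    IsAlgClosure.equivOfEquiv_algebraMap]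
  simp

theorem IsAlgClosed.exists_ringEquiv_comp_eq {R : Type*} {K L : Type u} [CommRing R]
    [Countable R] [Field K] [Field L] [IsAlgClosed K] [IsAlgClosed L]
    (hK : ℵ₀ < #K) (hKL : #K = #L) (f : R →+* K) (g : R →+* L)
    (hf : Function.Injective f) (hg : Function.Injective g) :
    ∃ σ : K ≃+* L, (σ : K →+* L).comp f = g := by
  let _ := f.toAlgebra
  let _ := g.toAlgebra
  have : FaithfulSMul R K := (faithfulSMul_iff_algebraMap_injective R K).mpr hf
  have : FaithfulSMul R L := (faithfulSMul_iff_algebraMap_injective R L).mpr hg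
  obtain ⟨σ⟩ := nonempty_algEquiv_of_countable (R := R) hK hKL
  exact ⟨σ, RingHom.ext σ.commutes⟩

instance Polynomial.countable {R : Type*} [Semiring R] [Countable R] : Countable R[X] :=
  (AddMonoidAlgebra.coeff_injective.comp Polynomial.toFinsupp_injective).countable

section Conjugates

variable {F K : Type*} [Field K] [IsAlgClosed K]

theorem IsAlgClosed.exists_algEquiv_apply_eq_of_aeval_eq_zero_iff [CommRing F] [Countable F]
    [Algebra F K] (hK : ℵ₀ < #K) {x y : K} (hxy : ∀ p : F[X], aeval x p = 0 ↔ aeval y p = 0) :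
    ∃ σ : K ≃ₐ[F] K, σ x = y := by
  let fx : F[X] →+* K := (aeval x : F[X] →ₐ[F] K)
  let fy : F[X] →+* K := (aeval y : F[X] →ₐ[F] K)
  have hker : RingHom.ker fx = RingHom.ker fy := Ideal.ext fun p => hxy p
  have : Countable (F[X] ⧸ RingHom.ker fx) := Ideal.Quotient.mk_surjective.countable
  let g : F[X] ⧸ RingHom.ker fx →+* K := (RingHom.kerLift fy).comp (Ideal.quotEquivOfEq hker)
  have hg : Function.Injective g :=
    (RingHom.kerLift_injective fy).comp (Ideal.quotEquivOfEq hker).injective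
  obtain ⟨σ, hσ⟩ := exists_ringEquiv_comp_eq hK rfl _ g (RingHom.kerLift_injective fx) hg
  have hσ_mk (p : F[X]) : σ (aeval x p) = aeval y p := RingHom.congr_fun hσ (Ideal.Quotient.mk _ p)
  refine ⟨AlgEquiv.ofRingEquiv (f := σ) fun c => ?_, ?_⟩
  · simpa using hσ_mk (C c)
  · simpa using hσ_mk X

theorem IsAlgClosed.exists_algEquiv_apply_eq_of_transcendental [CommRing F] [Countable F]
    [Algebra F K] (hK : ℵ₀ < #K) {x y : K} (hx : Transcendental F x) (hy : Transcendental F y) :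
    ∃ σ : K ≃ₐ[F] K, σ x = y :=
  exists_algEquiv_apply_eq_of_aeval_eq_zero_iff hK fun p =>
    ⟨fun h => by rw [transcendental_iff.1 hx p h, map_zero],
      fun h => by rw [transcendental_iff.1 hy p h, map_zero]⟩

theorem IsAlgClosed.exists_algEquiv_apply_eq_of_aeval_minpoly_eq_zero [Field F] [Countable F]
    [Algebra F K] (hK : ℵ₀ < #K) {x y : K} (hx : IsAlgebraic F x)
    (hy : aeval y (minpoly F x) = 0) : ∃ σ : K ≃ₐ[F] K, σ x = y := by
  have hmin : minpoly F x = minpoly F y := minpoly.eq_of_irreducible_of_monic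
    (minpoly.irreducible hx.isIntegral) hy (minpoly.monic hx.isIntegral)
  exact exists_algEquiv_apply_eq_of_aeval_eq_zero_iff hK fun p => by
    rw [← minpoly.dvd_iff, ← minpoly.dvd_iff, hmin]

end Conjugates

theorem Complex.aleph0_lt_mk : ℵ₀ < #ℂ := by
  rw [mk_complex]
  exact aleph0_lt_continuum

theorem Complex.isAlgebraic_I : IsAlgebraic ℚ I :=
  ⟨X ^ 2 + C 1, (monic_X_pow_add_C 1 two_ne_zero).ne_zero, by simp⟩

/-- Critical points of the master function `∑_H ε_H log (∑_i a_H i z_i + b_H)` off the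
arrangement. -/
def IsMasterCriticalPoint {ι κ K : Type*} [Fintype ι] [Fintype κ] [Field K]
    (a : ι → κ → ℚ) (b ε : ι → ℚ) (z : κ → K) : Prop :=
  (∀ H : ι, (∑ i, (a H i : K) * z i) + (b H : K) ≠ 0) ∧
    ∀ i : κ, ∑ H : ι, (ε H : K) * (a H i : K) / ((∑ i', (a H i' : K) * z i') + (b H : K)) = 0

theorem IsMasterCriticalPoint.map {ι κ K L : Type*} [Fintype ι] [Fintype κ] [Field K]
    [Field L] {a : ι → κ → ℚ} {b ε : ι → ℚ} {z : κ → K}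
    (hz : IsMasterCriticalPoint a b ε z) (σ : K →+* L) :
    IsMasterCriticalPoint a b ε (σ ∘ z) := by
  have hσ_form (H : ι) : (∑ i, (a H i : L) * σ (z i)) + (b H : L) =
      σ ((∑ i, (a H i : K) * z i) + (b H : K)) := by
    simp only [map_add, map_sum, map_mul, map_ratCast]
  refine ⟨fun H hH => hz.1 H ?_, fun i => ?_⟩
  · exact σ.injective (by rw [map_zero, ← hσ_form, ← hH]; rfl)
  · simpa only [Function.comp_apply, map_zero, map_sum, map_div₀, map_mul, map_ratCast,
      hσ_form] using congrArg σ (hz.2 i)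

theorem master_function_critical_points_totally_real_general
    (n : ℕ) (ι : Type*) [Fintype ι]
    (a : ι → Fin n → ℚ) (b : ι → ℚ)
    (ε : ι → ℚ)
    (crit : (Fin n → ℂ) → Prop)
    (hcrit : ∀ z, crit z ↔
      ((∀ H : ι, (∑ i, (a H i : ℂ) * z i) + (b H : ℂ) ≠ 0) ∧
       ∀ i : Fin n, ∑ H : ι, (ε H : ℂ) * (a H i : ℂ) /
          ((∑ i', (a H i' : ℂ) * z i') + (b H : ℂ)) = 0))
    (hreal : ∀ z, crit z → ∀ i : Fin n, (z i).im = 0) :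
    ∀ z, crit z → ∀ i : Fin n,
      IsAlgebraic ℚ (z i) ∧
        ∀ w : ℂ, Polynomial.aeval w (minpoly ℚ (z i)) = 0 → w.im = 0 := by
  intro z hz i
  have hz' : IsMasterCriticalPoint a b ε z := (hcrit z).1 hz
  have hconj_real (σ : ℂ ≃ₐ[ℚ] ℂ) : (σ (z i)).im = 0 :=
    hreal _ ((hcrit _).2 (hz'.map (σ : ℂ →+* ℂ))) i
  have halg : IsAlgebraic ℚ (z i) := by
    by_contra htr
    have htr_shift : Transcendental ℚ (z i + Complex.I) := fun h =>
      htr (by simpa using h.sub Complex.isAlgebraic_I)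
    obtain ⟨σ, hσ⟩ := IsAlgClosed.exists_algEquiv_apply_eq_of_transcendental
      Complex.aleph0_lt_mk htr htr_shift
    simpa [hσ, hreal z hz i] using hconj_real σ
  refine ⟨halg, fun w hw => ?_⟩
  obtain ⟨σ, hσ⟩ :=
    IsAlgClosed.exists_algEquiv_apply_eq_of_aeval_minpoly_eq_zero Complex.aleph0_lt_mk halg hw
  simpa [hσ] using hconj_real σ

/-- For an essential real arrangement defined over `ℚ` with positive
rational weights, if every critical point of the master function is real, then every
coordinate of every critical point is a totally real algebraic number (all of whose
Galois conjugates over `ℚ` are real). -/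
theorem master_function_critical_points_totally_real
    (n : ℕ) (ι : Type*) [Fintype ι]
    (a : ι → Fin n → ℚ) (b : ι → ℚ)
    (hess : Submodule.span ℚ (Set.range a) = ⊤)
    (ε : ι → ℚ) (hε : ∀ H : ι, 0 < ε H)
    (crit : (Fin n → ℂ) → Prop)
    (hcrit : ∀ z, crit z ↔
      ((∀ H : ι, (∑ i, (a H i : ℂ) * z i) + (b H : ℂ) ≠ 0) ∧
       ∀ i : Fin n, ∑ H : ι, (ε H : ℂ) * (a H i : ℂ) /
          ((∑ i', (a H i' : ℂ) * z i') + (b H : ℂ)) = 0))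
    (hreal : ∀ z, crit z → ∀ i : Fin n, (z i).im = 0) :
    ∀ z, crit z → ∀ i : Fin n,
      IsAlgebraic ℚ (z i) ∧
        ∀ w : ℂ, Polynomial.aeval w (minpoly ℚ (z i)) = 0 → w.im = 0 :=
  master_function_critical_points_totally_real_general n ι a b ε crit hcrit hreal
end

section
/- Let G be a finite connected simple graph with independent boundary B, |B| ≥ 2, injective u : B → ℝ. The map sending X ∈ L(A(G,u)) (a nonempty intersection of hyperplanes of the Dirichlet arrangement) to the partition of V whose blocks are the maximal sets of vertices connected by paths along which the coordinates of any point of X are constant, is an order-isomorphism from the intersection poset L(A(G,u)), ordered by reverse inclusion, onto the poset of boundary-separating connected partitions of G, ordered by refinement. -/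
open SimpleGraph


/-- The map `X ↦ λ_X`, sending a nonempty intersection of hyperplanes
of the Dirichlet arrangement to the partition of `V` whose blocks are maximal sets of
vertices joined by paths along which every point of `X` is constant, is an
order-isomorphism from the intersection poset `L(A(G,u))` (reverse inclusion) onto
the poset of boundary-separating connected partitions of `G` (refinement order).
This is expressed by: (a) for `X ∈ L`, `λ_X` is a boundary-separating connected
partition; (b) every boundary-separating connected partition arises as `λ_X` for
some `X ∈ L`; (c) for `X, Y ∈ L`, `Y ⊆ X` iff `λ_X` refines `λ_Y`. -/
theorem dirichlet_intersection_poset_iso_boundary_separating_partitions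
    (V : Type*) [Fintype V] (G : SimpleGraph V) (hconn : G.Connected)
    (B : Set V) (hB2 : 2 ≤ Nat.card B)
    (hBindep : ∀ i ∈ B, ∀ j ∈ B, ¬ G.Adj i j)
    (u : V → ℝ) (hu : Set.InjOn u B)
    (L : Set (Set (V → ℝ)))
    (hL : L = {X | X.Nonempty ∧ ∃ S : Set (V × V),
      (∀ p ∈ S, G.Adj p.1 p.2) ∧
      X = {x | (∀ j ∈ B, x j = u j) ∧ ∀ p ∈ S, x p.1 = x p.2}})
    (rel : Set (V → ℝ) → V → V → Prop)
    (hrel : ∀ X (i j : V), rel X i j ↔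
      ∃ p : G.Walk i j, ∀ x ∈ X, ∀ v ∈ p.support, x v = x i) :
    (∀ X ∈ L, Equivalence (rel X) ∧
      (∀ i j : V, rel X i j → ∃ p : G.Walk i j, ∀ v ∈ p.support, rel X i v) ∧
      (∀ i ∈ B, ∀ j ∈ B, rel X i j → i = j)) ∧
    (∀ s : V → V → Prop, Equivalence s →
      (∀ i j : V, s i j → ∃ p : G.Walk i j, ∀ v ∈ p.support, s i v) →
      (∀ i ∈ B, ∀ j ∈ B, s i j → i = j) →
      ∃ X ∈ L, ∀ i j : V, rel X i j ↔ s i j) ∧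
    (∀ X ∈ L, ∀ Y ∈ L, (Y ⊆ X ↔ ∀ i j : V, rel X i j → rel Y i j)) := by
  classical
  subst hL
  refine ⟨?_, ?_, ?_⟩
  · -- part (a)
    rintro X ⟨hne, S, hSadj, rfl⟩
    refine ⟨⟨?_, ?_, ?_⟩, ?_, ?_⟩
    · intro i
      rw [hrel]
      refine ⟨Walk.nil, fun x hx v hv => ?_⟩
      rw [Walk.support_nil, List.mem_singleton] at hv
      subst hv; rfl
    · intro i j h
      rw [hrel] at h ⊢
      obtain ⟨p, hp⟩ := h
      refine ⟨p.reverse, fun x hx v hv => ?_⟩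
      rw [Walk.support_reverse, List.mem_reverse] at hv
      rw [hp x hx v hv, hp x hx j p.end_mem_support]
    · intro i j k hij hjk
      rw [hrel] at hij hjk ⊢
      obtain ⟨p, hp⟩ := hij
      obtain ⟨q, hq⟩ := hjk
      refine ⟨p.append q, fun x hx v hv => ?_⟩
      rw [Walk.mem_support_append_iff] at hv
      rcases hv with hv | hv
      · exact hp x hx v hv
      · rw [hq x hx v hv]; exact hp x hx j p.end_mem_support
    · intro i j h
      rw [hrel] at h
      obtain ⟨p, hp⟩ := h
      refine ⟨p, fun v hv => ?_⟩
      rw [hrel]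
      exact ⟨p.takeUntil v hv, fun x hx w hw =>
        hp x hx w (Walk.support_takeUntil_subset p hv hw)⟩
    · intro i hi j hj h
      rw [hrel] at h
      obtain ⟨p, hp⟩ := h
      obtain ⟨x, hx⟩ := hne
      have h1 : x j = x i := hp x hx j p.end_mem_support
      have h2 := hx.1 i hi
      have h3 := hx.1 j hj
      exact hu hi hj (by rw [← h2, ← h3]; exact h1.symm)
  · -- part (b)
    intro s hs hwalk hsep
    set f : V → ℝ := fun v => if h : ∃ b, b ∈ B ∧ s v b then u h.choose else 0 with hf
    have f_spec : ∀ v b, b ∈ B → s v b → f v = u b := by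
      intro v b hb hvb
      have h : ∃ b, b ∈ B ∧ s v b := ⟨b, hb, hvb⟩
      have hc := h.choose_spec
      have heq : h.choose = b := hsep _ hc.1 _ hb (hs.trans (hs.symm hc.2) hvb)
      simp only [hf, dif_pos h, heq]
    have f_const : ∀ v w, s v w → f v = f w := by
      intro v w hvw
      by_cases h : ∃ b, b ∈ B ∧ s v b
      · obtain ⟨b, hb, hvb⟩ := h
        rw [f_spec v b hb hvb, f_spec w b hb (hs.trans (hs.symm hvw) hvb)]
      · have h' : ¬ ∃ b, b ∈ B ∧ s w b := by
          rintro ⟨b, hb, hwb⟩; exact h ⟨b, hb, hs.trans hvw hwb⟩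
        simp only [hf, dif_neg h, dif_neg h']
    set S : Set (V × V) := {p | G.Adj p.1 p.2 ∧ s p.1 p.2} with hS
    set X : Set (V → ℝ) := {x | (∀ j ∈ B, x j = u j) ∧ ∀ p ∈ S, x p.1 = x p.2} with hX
    have hfX : f ∈ X := by
      refine ⟨fun j hj => f_spec j j hj (hs.refl j), ?_⟩
      rintro ⟨p, q⟩ ⟨hadj, hpq⟩
      exact f_const p q hpq
    have hg : ∀ (v : V) (t : ℝ), (¬ ∃ b, b ∈ B ∧ s v b) →
        (fun z => if s v z then t else f z) ∈ X := by
      intro v t hv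
      constructor
      · intro j hj
        have hnj : ¬ s v j := fun h => hv ⟨j, hj, h⟩
        show (if s v j then t else f j) = u j
        rw [if_neg hnj]
        exact f_spec j j hj (hs.refl j)
      · rintro ⟨p, q⟩ ⟨hadj, hpq⟩
        show (if s v p then t else f p) = (if s v q then t else f q)
        by_cases h : s v p
        · rw [if_pos h, if_pos (hs.trans h hpq)]
        · have h2 : ¬ s v q := fun hq => h (hs.trans hq (hs.symm hpq))
          rw [if_neg h, if_neg h2]
          exact f_const p q hpq
    have claim : ∀ v w, (∀ x ∈ X, x v = x w) → s v w := by
      intro v w hall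
      by_contra hns
      by_cases hv : ∃ b, b ∈ B ∧ s v b
      · by_cases hw : ∃ b, b ∈ B ∧ s w b
        · obtain ⟨b, hb, hvb⟩ := hv
          obtain ⟨b', hb', hwb⟩ := hw
          have hbb : b ≠ b' := by
            rintro rfl; exact hns (hs.trans hvb (hs.symm hwb))
          have h1 := hall f hfX
          rw [f_spec v b hb hvb, f_spec w b' hb' hwb] at h1
          exact hbb (hu hb hb' h1)
        · have h1 : (if s w v then f v + 1 else f v) = (if s w w then f v + 1 else f w) :=
            hall _ (hg w (f v + 1) hw)
          rw [if_neg (fun h => hns (hs.symm h)), if_pos (hs.refl w)] at h1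
          linarith
      · have h1 : (if s v v then f w + 1 else f v) = (if s v w then f w + 1 else f w) :=
          hall _ (hg v (f w + 1) hv)
        rw [if_pos (hs.refl v), if_neg hns] at h1
        linarith
    have aux1 : ∀ (i j : V) (p : G.Walk i j),
        (∀ x ∈ X, ∀ v ∈ p.support, x v = x i) → s i j := by
      intro i j p
      induction p with
      | nil => intro _; exact hs.refl _
      | @cons a b c h q ih =>
        intro H
        have hb : b ∈ (Walk.cons h q).support := by
          rw [Walk.support_cons]
          exact List.mem_cons_of_mem _ q.start_mem_support
        have hab : s a b := hs.symm (claim b a (fun x hx => H x hx b hb))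
        refine hs.trans hab (ih fun x hx v hv => ?_)
        have hv' : v ∈ (Walk.cons h q).support := by
          rw [Walk.support_cons]; exact List.mem_cons_of_mem _ hv
        rw [H x hx v hv', H x hx b hb]
    have aux2 : ∀ (i j : V) (p : G.Walk i j),
        (∀ v ∈ p.support, s i v) → ∀ x ∈ X, ∀ v ∈ p.support, x v = x i := by
      intro i j p
      induction p with
      | nil =>
        intro _ x hx v hv
        rw [Walk.support_nil, List.mem_singleton] at hv
        subst hv; rfl
      | @cons a b c h q ih =>
        intro H x hx v hv
        have hb : b ∈ (Walk.cons h q).support := by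
          rw [Walk.support_cons]
          exact List.mem_cons_of_mem _ q.start_mem_support
        have hab : s a b := H b hb
        have hxab : x a = x b := hx.2 (⟨a, b⟩ : V × V) ⟨h, hab⟩
        rw [Walk.support_cons, List.mem_cons] at hv
        rcases hv with rfl | hv
        · rfl
        · have hq : ∀ w ∈ q.support, s b w := by
            intro w hw
            have : w ∈ (Walk.cons h q).support := by
              rw [Walk.support_cons]; exact List.mem_cons_of_mem _ hw
            exact hs.trans (hs.symm hab) (H w this)
          rw [ih hq x hx v hv, hxab]
    refine ⟨X, ⟨⟨f, hfX⟩, S, fun p hp => hp.1, hX⟩, ?_⟩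
    intro i j
    rw [hrel]
    constructor
    · rintro ⟨p, hp⟩
      exact aux1 i j p hp
    · intro hij
      obtain ⟨p, hp⟩ := hwalk i j hij
      exact ⟨p, aux2 i j p hp⟩
  · -- part (c)
    rintro X ⟨hXne, S, hSadj, rfl⟩ Y ⟨hYne, T, hTadj, rfl⟩
    constructor
    · intro hYX i j h
      rw [hrel] at h ⊢
      obtain ⟨p, hp⟩ := h
      exact ⟨p, fun x hx => hp x (hYX hx)⟩
    · intro h y hy
      refine ⟨hy.1, ?_⟩
      rintro ⟨p, q⟩ hpq
      have h1 : rel {x | (∀ j ∈ B, x j = u j) ∧ ∀ p ∈ S, x p.1 = x p.2} p q := by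
        rw [hrel]
        refine ⟨Walk.cons (hSadj _ hpq) Walk.nil, fun x hx v hv => ?_⟩
        rw [Walk.support_cons, Walk.support_nil, List.mem_cons] at hv
        rcases hv with rfl | hv
        · rfl
        · rw [List.mem_singleton] at hv
          rw [hv]
          exact (hx.2 (⟨p, q⟩ : V × V) hpq).symm
      have h2 := h p q h1
      rw [hrel] at h2
      obtain ⟨w, hw⟩ := h2
      exact (hw y hy q w.end_mem_support).symm
end
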